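/- arXiv:1111.0240 — 7 statements merged into one kernel-verified Lean document; each statement's English description precedes it below -/
import Mathlib

section
/- Let p be an odd prime, q a primitive p-th root of unity, and S the (p−1)×(p−1) complex matrix with entries S_{ij} = (−1)^{ij}(q^{ij} − q^{−ij}) for 1 ≤ i,j ≤ p−1. Then S² = −2p·I, where I is the identity matrix. -/
open Finset Matrix

private lemma aux_id (α γ : ℂ) (hα : α ≠ 0) (hγ : γ ≠ 0) :
    (α - α⁻¹) * (γ - γ⁻¹) =
      (α * γ + (α * γ)⁻¹) - (α * γ⁻¹ + (α * γ⁻¹)⁻¹) := by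
  field_simp
  ring

private lemma aux_geom (p : ℕ) (hp : 0 < p) (x : ℂ) (hx1 : x ≠ 1) (hxp : x ^ p = 1) :
    ∑ b ∈ Finset.range (p - 1), x ^ (b + 1) = -1 := by
  have h0 : ∑ b ∈ Finset.range p, x ^ b = 0 := by
    have h := geom_sum_mul x p
    rw [hxp, sub_self] at h
    rcases mul_eq_zero.mp h with h | h
    · exact h
    · exact absurd (sub_eq_zero.mp h) hx1
  have hp' : p = (p - 1) + 1 := (Nat.succ_pred_eq_of_pos hp).symm
  rw [hp', Finset.sum_range_succ'] at h0
  rw [pow_zero] at h0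
  exact eq_neg_of_add_eq_zero_left h0

private lemma aux_shift (p : ℕ) (hp : 0 < p) (x : ℂ) :
    ∑ b ∈ Finset.range (p - 1), x ^ (b + 1) = (∑ b ∈ Finset.range p, x ^ b) - 1 := by
  conv_rhs => rw [show p = (p - 1) + 1 from (Nat.succ_pred_eq_of_pos hp).symm,
    Finset.sum_range_succ']
  rw [pow_zero]
  ring

private lemma aux_odd (p : ℕ) (hp : 0 < p) (x : ℂ) (hx0 : x ≠ 0) (hxp : x ^ p = -1) :
    (∑ b ∈ Finset.range (p - 1), x ^ (b + 1)) +
      (∑ b ∈ Finset.range (p - 1), (x⁻¹) ^ (b + 1)) = 0 := by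
  have hx1 : x ≠ 1 := by rintro rfl; rw [one_pow] at hxp; norm_num at hxp
  have hxi0 : x⁻¹ ≠ 0 := inv_ne_zero hx0
  have hxi1 : x⁻¹ ≠ 1 := fun h => hx1 (inv_eq_one.mp h)
  have hxip : (x⁻¹) ^ p = -1 := by rw [inv_pow, hxp]; norm_num
  have hS1 : ∑ b ∈ Finset.range p, x ^ b = -2 / (x - 1) := by
    have h := geom_sum_mul x p
    rw [hxp] at h
    rw [eq_div_iff (sub_ne_zero.mpr hx1)]
    rw [h]; ring
  have hS2 : ∑ b ∈ Finset.range p, (x⁻¹) ^ b = -2 / (x⁻¹ - 1) := by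
    have h := geom_sum_mul x⁻¹ p
    rw [hxip] at h
    rw [eq_div_iff (sub_ne_zero.mpr hxi1)]
    rw [h]; ring
  rw [aux_shift p hp, aux_shift p hp, hS1, hS2]
  have h1 : x - 1 ≠ 0 := sub_ne_zero.mpr hx1
  have h2 : x⁻¹ - 1 ≠ 0 := sub_ne_zero.mpr hxi1
  have e : -2 / (x⁻¹ - 1) = 2 * x / (x - 1) := by
    rw [div_eq_div_iff h2 h1]
    field_simp
    ring
  rw [e]
  field_simp
  ring

private lemma not_dvd (p : ℕ) (hp : p.Prime) (hodd : Odd p) (a c : ℕ)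
    (ha1 : 1 ≤ a) (ha2 : a ≤ p - 1) (hc1 : 1 ≤ c) (hc2 : c ≤ p - 1)
    (hev : Even (a + c)) : ¬ p ∣ (a + c) := by
  rintro ⟨m, hm⟩
  obtain ⟨kk, hk⟩ := hodd
  obtain ⟨e, he⟩ := hev
  have hple : 2 ≤ p := hp.two_le
  rcases Nat.lt_or_ge m 2 with h2 | h2
  · interval_cases m <;> omega
  · have h3 : p * 2 ≤ p * m := Nat.mul_le_mul_left p h2
    omega

private lemma key (p : ℕ) (hp : p.Prime) (hodd : Odd p) (q : ℂ)
    (hq : IsPrimitiveRoot q p) (a c : ℕ)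
    (ha1 : 1 ≤ a) (ha2 : a ≤ p - 1) (hc1 : 1 ≤ c) (hc2 : c ≤ p - 1) :
    ∑ b ∈ Finset.range (p - 1),
      ((-1 : ℂ) ^ (a * (b + 1)) * (q ^ (a * (b + 1)) - q⁻¹ ^ (a * (b + 1)))) *
      ((-1 : ℂ) ^ ((b + 1) * c) * (q ^ ((b + 1) * c) - q⁻¹ ^ ((b + 1) * c))) =
      if a = c then -(2 * (p : ℂ)) else 0 := by
  have hp0 : 0 < p := hp.pos
  have hq1 : q ^ p = 1 := hq.pow_eq_one
  have hq0 : q ≠ 0 := by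
    intro h
    rw [h, zero_pow hp0.ne'] at hq1
    exact zero_ne_one hq1
  have hr0 : (-q : ℂ) ≠ 0 := neg_ne_zero.mpr hq0
  have hrp : (-q : ℂ) ^ p = -1 := by rw [hodd.neg_pow, hq1]
  have hA0 : (-q) ^ a ≠ 0 := pow_ne_zero _ hr0
  have hC0 : (-q) ^ c ≠ 0 := pow_ne_zero _ hr0
  have hSgen : ∀ n : ℕ, (-1 : ℂ) ^ n * (q ^ n - q⁻¹ ^ n) = (-q) ^ n - ((-q) ^ n)⁻¹ := by
    intro n
    have h2 : ((-1 : ℂ) ^ n)⁻¹ = (-1) ^ n := by rw [← inv_pow]; norm_num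
    rw [neg_pow q n, mul_inv, h2, inv_pow]
    ring
  have hXY : ∀ b : ℕ,
      ((-1 : ℂ) ^ (a * (b + 1)) * (q ^ (a * (b + 1)) - q⁻¹ ^ (a * (b + 1)))) *
      ((-1 : ℂ) ^ ((b + 1) * c) * (q ^ ((b + 1) * c) - q⁻¹ ^ ((b + 1) * c))) =
      (((-q) ^ a * (-q) ^ c) ^ (b + 1) + (((-q) ^ a * (-q) ^ c)⁻¹) ^ (b + 1))
      - (((-q) ^ a * ((-q) ^ c)⁻¹) ^ (b + 1) + (((-q) ^ a * ((-q) ^ c)⁻¹)⁻¹) ^ (b + 1)) := by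
    intro b
    rw [hSgen, hSgen]
    rw [inv_pow ((-q) ^ a * (-q) ^ c), inv_pow ((-q) ^ a * ((-q) ^ c)⁻¹)]
    rw [pow_mul (-q) a (b + 1), mul_comm (b + 1) c, pow_mul (-q) c (b + 1)]
    rw [mul_pow ((-q) ^ a) ((-q) ^ c), mul_pow ((-q) ^ a) (((-q) ^ c)⁻¹),
      inv_pow ((-q) ^ c)]
    exact aux_id _ _ (pow_ne_zero _ hA0) (pow_ne_zero _ hC0)
  rw [Finset.sum_congr rfl (fun b _ => hXY b)]
  rw [Finset.sum_sub_distrib, Finset.sum_add_distrib, Finset.sum_add_distrib]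
  have hrightcomm : ∀ m : ℕ, ((-q) ^ m) ^ p = (-1 : ℂ) ^ m := by
    intro m
    rw [← pow_mul, mul_comm, pow_mul, hrp]
  have hinvc : ((-1 : ℂ) ^ c)⁻¹ = (-1) ^ c := by rw [← inv_pow]; norm_num
  by_cases hac : a = c
  · subst hac
    rw [if_pos rfl]
    have hev : Even (a + a) := Even.add_self a
    have hX : (-q) ^ a * (-q) ^ a = q ^ (a + a) := by rw [← pow_add, hev.neg_pow]
    have hnd := not_dvd p hp hodd a a ha1 ha2 ha1 ha2 hev
    have hX1 : (-q) ^ a * (-q) ^ a ≠ 1 := by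
      rw [hX]
      intro h
      exact hnd ((hq.pow_eq_one_iff_dvd _).mp h)
    have hXp : ((-q) ^ a * (-q) ^ a) ^ p = 1 := by
      rw [hX, ← pow_mul, mul_comm, pow_mul, hq1, one_pow]
    have hXi1 : ((-q) ^ a * (-q) ^ a)⁻¹ ≠ 1 := fun h => hX1 (inv_eq_one.mp h)
    have hXip : (((-q) ^ a * (-q) ^ a)⁻¹) ^ p = 1 := by rw [inv_pow, hXp, inv_one]
    rw [aux_geom p hp0 _ hX1 hXp, aux_geom p hp0 _ hXi1 hXip]
    have hY : (-q) ^ a * ((-q) ^ a)⁻¹ = 1 := mul_inv_cancel₀ hA0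
    rw [hY, inv_one]
    simp only [one_pow, Finset.sum_const, Finset.card_range, nsmul_eq_mul, mul_one]
    rw [Nat.cast_sub (by omega : 1 ≤ p)]
    push_cast
    ring
  · rw [if_neg hac]
    rcases Nat.even_or_odd (a + c) with hev | hoddac
    · -- even case
      have hpar : ((-1 : ℂ)) ^ a = (-1) ^ c := by
        have hiff := Nat.even_add.mp hev
        rcases Nat.even_or_odd a with h1 | h1
        · rw [h1.neg_one_pow, (hiff.mp h1).neg_one_pow]
        · have h2 : Odd c := Nat.not_even_iff_odd.mp
            (fun h => (Nat.not_even_iff_odd.mpr h1) (hiff.mpr h))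
          rw [h1.neg_one_pow, h2.neg_one_pow]
      have hX : (-q) ^ a * (-q) ^ c = q ^ (a + c) := by rw [← pow_add, hev.neg_pow]
      have hnd := not_dvd p hp hodd a c ha1 ha2 hc1 hc2 hev
      have hX1 : (-q) ^ a * (-q) ^ c ≠ 1 := by
        rw [hX]
        intro h
        exact hnd ((hq.pow_eq_one_iff_dvd _).mp h)
      have hXp : ((-q) ^ a * (-q) ^ c) ^ p = 1 := by
        rw [hX, ← pow_mul, mul_comm, pow_mul, hq1, one_pow]
      have hXi1 : ((-q) ^ a * (-q) ^ c)⁻¹ ≠ 1 := fun h => hX1 (inv_eq_one.mp h)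
      have hXip : (((-q) ^ a * (-q) ^ c)⁻¹) ^ p = 1 := by rw [inv_pow, hXp, inv_one]
      have hY1 : (-q) ^ a * ((-q) ^ c)⁻¹ ≠ 1 := by
        rw [Ne, mul_inv_eq_one₀ hC0]
        intro h
        apply hac
        have hqq : q ^ a = q ^ c := by
          rw [neg_pow q a, neg_pow q c, hpar] at h
          exact mul_left_cancel₀ (pow_ne_zero _ (by norm_num : (-1 : ℂ) ≠ 0)) h
        exact hq.pow_inj (by omega) (by omega) hqq
      have hYp : ((-q) ^ a * ((-q) ^ c)⁻¹) ^ p = 1 := by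
        rw [mul_pow, inv_pow ((-q) ^ c) p, hrightcomm a, hrightcomm c, hpar]
        exact mul_inv_cancel₀ (pow_ne_zero _ (by norm_num))
      have hYi1 : ((-q) ^ a * ((-q) ^ c)⁻¹)⁻¹ ≠ 1 := fun h => hY1 (inv_eq_one.mp h)
      have hYip : (((-q) ^ a * ((-q) ^ c)⁻¹)⁻¹) ^ p = 1 := by rw [inv_pow, hYp, inv_one]
      rw [aux_geom p hp0 _ hX1 hXp, aux_geom p hp0 _ hXi1 hXip,
        aux_geom p hp0 _ hY1 hYp, aux_geom p hp0 _ hYi1 hYip]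
      norm_num
    · -- odd case
      have hX0 : (-q) ^ a * (-q) ^ c ≠ 0 := mul_ne_zero hA0 hC0
      have hY0 : (-q) ^ a * ((-q) ^ c)⁻¹ ≠ 0 := mul_ne_zero hA0 (inv_ne_zero hC0)
      have hXp : ((-q) ^ a * (-q) ^ c) ^ p = -1 := by
        rw [← pow_add, hrightcomm, hoddac.neg_one_pow]
      have hYp : ((-q) ^ a * ((-q) ^ c)⁻¹) ^ p = -1 := by
        rw [mul_pow, inv_pow ((-q) ^ c) p, hrightcomm a, hrightcomm c, hinvc,
          ← pow_add, hoddac.neg_one_pow]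
      have h1 := aux_odd p hp0 _ hX0 hXp
      have h2 := aux_odd p hp0 _ hY0 hYp
      rw [h1, h2]
      norm_num

theorem S_matrix_squared (p : ℕ) (hp : p.Prime) (hodd : Odd p)
    (q : ℂ) (hq : IsPrimitiveRoot q p)
    (S : Matrix (Fin (p - 1)) (Fin (p - 1)) ℂ)
    (hS : ∀ i j : Fin (p - 1), S i j =
      (-1 : ℂ) ^ (((i : ℕ) + 1) * ((j : ℕ) + 1)) *
        (q ^ (((i : ℕ) + 1) * ((j : ℕ) + 1)) - q⁻¹ ^ (((i : ℕ) + 1) * ((j : ℕ) + 1)))) :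
    S * S = (-(2 * (p : ℂ))) • (1 : Matrix (Fin (p - 1)) (Fin (p - 1)) ℂ) := by
  ext i k
  rw [Matrix.mul_apply, Matrix.smul_apply, Matrix.one_apply, smul_eq_mul]
  have hsum : ∑ j : Fin (p - 1), S i j * S j k =
      ∑ b ∈ Finset.range (p - 1),
      ((-1 : ℂ) ^ (((i : ℕ) + 1) * (b + 1)) *
        (q ^ (((i : ℕ) + 1) * (b + 1)) - q⁻¹ ^ (((i : ℕ) + 1) * (b + 1)))) *
      ((-1 : ℂ) ^ ((b + 1) * ((k : ℕ) + 1)) *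
        (q ^ ((b + 1) * ((k : ℕ) + 1)) - q⁻¹ ^ ((b + 1) * ((k : ℕ) + 1)))) := by
    rw [← Fin.sum_univ_eq_sum_range (fun b =>
      ((-1 : ℂ) ^ (((i : ℕ) + 1) * (b + 1)) *
        (q ^ (((i : ℕ) + 1) * (b + 1)) - q⁻¹ ^ (((i : ℕ) + 1) * (b + 1)))) *
      ((-1 : ℂ) ^ ((b + 1) * ((k : ℕ) + 1)) *
        (q ^ ((b + 1) * ((k : ℕ) + 1)) - q⁻¹ ^ ((b + 1) * ((k : ℕ) + 1))))) (p - 1)]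
    exact Finset.sum_congr rfl (fun j _ => by rw [hS i j, hS j k])
  rw [hsum, key p hp hodd q hq ((i : ℕ) + 1) ((k : ℕ) + 1)
    (by omega) (by have := i.isLt; omega) (by omega) (by have := k.isLt; omega)]
  by_cases h : i = k
  · subst h
    rw [if_pos rfl, if_pos rfl, mul_one]
  · have h' : (i : ℕ) + 1 ≠ (k : ℕ) + 1 := fun hh => h (Fin.ext (by omega))
    rw [if_neg h', if_neg h, mul_zero]
end

section
/- Let p be an odd prime, q a primitive p-th root of unity, C the (p−1)×(p−1) tridiagonal matrix with C_{ii}=2 and C_{j,j−1}=C_{j−1,j}=1, S the matrix with S_{ij}=(−1)^{ij}(q^{ij}−q^{−ij}), and Q the diagonal matrix with entries Q_{jj} = 2 + (−1)^j(q^j + q^{−j}). Then C·S = S·Q. -/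
open Finset Matrix

private lemma key_aux (q : ℂ) (hq0 : q * q⁻¹ = 1) (m b : ℕ) :
    (-1:ℂ)^(b*m) * (q^(b*m) - q⁻¹^(b*m)) +
      (-1:ℂ)^((b+2)*m) * (q^((b+2)*m) - q⁻¹^((b+2)*m)) =
    ((-1:ℂ)^m * (q^m + q⁻¹^m)) *
      ((-1:ℂ)^((b+1)*m) * (q^((b+1)*m) - q⁻¹^((b+1)*m))) := by
  have hrw : ∀ (x : ℂ) (a : ℕ), x^(a*m) = (x^m)^a := fun x a => by rw [mul_comm, pow_mul]
  have h1 : ((-1:ℂ))^m * (-1:ℂ)^m = 1 := by rw [← mul_pow]; norm_num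
  have h2 : q^m * q⁻¹^m = 1 := by rw [← mul_pow, hq0, one_pow]
  have hwv : ((-1:ℂ)^m * q^m) * ((-1:ℂ)^m * q⁻¹^m) = 1 := by
    rw [show ((-1:ℂ)^m * q^m) * ((-1:ℂ)^m * q⁻¹^m)
        = ((-1:ℂ)^m * (-1:ℂ)^m) * (q^m * q⁻¹^m) by ring, h1, h2, one_mul]
  simp only [hrw]
  linear_combination (-(((-1:ℂ)^m)^b * (q^m)^b) + ((-1:ℂ)^m)^b * (q⁻¹^m)^b) * hwv

theorem C_mul_S_eq_S_mul_Q (p : ℕ) (hp : p.Prime) (hodd : Odd p)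
    (q : ℂ) (hq : IsPrimitiveRoot q p)
    (C S Q : Matrix (Fin (p - 1)) (Fin (p - 1)) ℂ)
    (hC : ∀ i j : Fin (p - 1), C i j =
      if (i : ℕ) = (j : ℕ) then 2
      else if (i : ℕ) + 1 = (j : ℕ) ∨ (j : ℕ) + 1 = (i : ℕ) then 1 else 0)
    (hS : ∀ i j : Fin (p - 1), S i j =
      (-1 : ℂ) ^ (((i : ℕ) + 1) * ((j : ℕ) + 1)) *
        (q ^ (((i : ℕ) + 1) * ((j : ℕ) + 1)) - q⁻¹ ^ (((i : ℕ) + 1) * ((j : ℕ) + 1))))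
    (hQ : ∀ i j : Fin (p - 1), Q i j =
      if i = j then 2 + (-1 : ℂ) ^ ((j : ℕ) + 1) * (q ^ ((j : ℕ) + 1) + q⁻¹ ^ ((j : ℕ) + 1))
      else 0) :
    C * S = S * Q := by
  have hp3 : 3 ≤ p := by
    have h2 := hp.two_le
    rcases hodd with ⟨k, hk⟩
    omega
  have hq0 : q * q⁻¹ = 1 := mul_inv_cancel₀ (hq.ne_zero (by omega))
  ext i j
  rw [mul_apply, mul_apply]
  set m : ℕ := (j : ℕ) + 1 with hm
  set G : ℕ → ℂ := fun a => (-1:ℂ)^(a*m) * (q^(a*m) - q⁻¹^(a*m)) with hGdef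
  have hG0 : G 0 = 0 := by simp [hGdef]
  have hGp : G p = 0 := by
    have h1 : q ^ (p * m) = 1 := by rw [pow_mul, hq.pow_eq_one, one_pow]
    have h2 : q⁻¹ ^ (p * m) = 1 := by rw [inv_pow, h1, inv_one]
    simp [hGdef, h1, h2]
  have hSG : ∀ k : Fin (p-1), S k j = G ((k:ℕ)+1) := fun k => by rw [hS, hGdef]
  have hi : (i:ℕ) < p - 1 := i.isLt
  have hR : ∑ k, S i k * Q k j = G ((i:ℕ)+1) * (2 + (-1:ℂ)^m * (q^m + q⁻¹^m)) := by
    rw [Finset.sum_eq_single j (fun k _ hk => by rw [hQ, if_neg hk, mul_zero])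
      (fun h => absurd (Finset.mem_univ j) h)]
    rw [hQ, if_pos rfl, hSG i]
  have hL1 : ∑ k : Fin (p-1), C i k * S k j =
      ∑ a ∈ Finset.range (p-1),
        ((if (i:ℕ) = a then (2:ℂ) else if (i:ℕ)+1 = a ∨ a+1 = (i:ℕ) then 1 else 0) * G (a+1)) := by
    rw [← Fin.sum_univ_eq_sum_range]
    exact Finset.sum_congr rfl fun k _ => by rw [hC, hSG]
  have hL2 : ∀ a : ℕ,
      (if (i:ℕ) = a then (2:ℂ) else if (i:ℕ)+1 = a ∨ a+1 = (i:ℕ) then 1 else 0) * G (a+1) =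
      (if a = (i:ℕ) then 2 * G (a+1) else 0) + (if a = (i:ℕ)+1 then G (a+1) else 0) +
        (if a + 1 = (i:ℕ) then G (a+1) else 0) := by
    intro a
    split_ifs <;> first | ring1 | omega | (exfalso; omega)
  have hL3 : ∑ a ∈ Finset.range (p-1), (if a = (i:ℕ) then 2 * G (a+1) else 0)
      = 2 * G ((i:ℕ)+1) := by
    rw [Finset.sum_ite_eq' (Finset.range (p-1)) (i:ℕ) (fun a => 2 * G (a+1))]
    rw [if_pos (Finset.mem_range.mpr hi)]
  have hL4 : ∑ a ∈ Finset.range (p-1), (if a = (i:ℕ)+1 then G (a+1) else 0)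
      = G ((i:ℕ)+2) := by
    rw [Finset.sum_ite_eq' (Finset.range (p-1)) ((i:ℕ)+1) (fun a => G (a+1))]
    by_cases h : (i:ℕ)+1 ∈ Finset.range (p-1)
    · rw [if_pos h]
    · rw [if_neg h]
      rw [Finset.mem_range] at h
      have h2 : (i:ℕ) + 2 = p := by omega
      rw [h2, hGp]
  have hL5 : ∑ a ∈ Finset.range (p-1), (if a + 1 = (i:ℕ) then G (a+1) else 0)
      = G (i:ℕ) := by
    rcases Nat.eq_zero_or_pos (i:ℕ) with h0 | h0
    · rw [h0]
      simp [hG0]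
    · obtain ⟨t, ht⟩ : ∃ t, (i:ℕ) = t + 1 := ⟨(i:ℕ)-1, by omega⟩
      rw [ht]
      rw [Finset.sum_congr rfl (fun a _ =>
        if_congr (by omega : a + 1 = t + 1 ↔ a = t) rfl rfl)]
      rw [Finset.sum_ite_eq' (Finset.range (p-1)) t (fun a => G (a+1))]
      rw [if_pos (Finset.mem_range.mpr (by omega))]
  rw [hR, hL1, Finset.sum_congr rfl (fun a _ => hL2 a),
    Finset.sum_add_distrib, Finset.sum_add_distrib, hL3, hL4, hL5]
  have hkey := key_aux q hq0 m (i:ℕ)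
  simp only [hGdef]
  linear_combination hkey
end

section
/- Let p be an odd prime and C the (p−1)×(p−1) tridiagonal matrix with diagonal entries 2 and off-diagonal (sub- and super-diagonal) entries 1. With S and Q as above (S_{ij}=(−1)^{ij}(q^{ij}−q^{−ij}), Q diagonal with Q_{jj}=2+(−1)^j(q^j+q^{−j}), q = exp(2πi/p)), one has C = −(1/(2p)) S Q S. -/
open Finset Matrix Complex

private noncomputable def Gsum (p : ℕ) (r : ℂ) (m : ℤ) : ℂ := ∑ j ∈ Finset.range p, (r ^ m) ^ j

private noncomputable def Fterm (q : ℂ) (I K : ℤ) (j : ℕ) : ℂ :=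
  (((-q) ^ I) ^ j - ((-q) ^ (-I)) ^ j) * (2 + (-q) ^ ((j : ℤ)) + ((-q) ^ ((j : ℤ)))⁻¹) *
    (((-q) ^ K) ^ j - ((-q) ^ (-K)) ^ j)


private lemma aux_not_dvd (p : ℕ) (hodd : Odd p) (m : ℤ) (hm : Even m) (h0 : m ≠ 0)
    (habs : |m| < 2 * p) : ¬ (p : ℤ) ∣ m := by
  rintro ⟨c, rfl⟩
  have hoz : Odd (p : ℤ) := by exact_mod_cast hodd
  have hc : Even c := by
    rcases Int.even_mul.mp hm with h | h
    · exact absurd h (by simpa [Int.not_odd_iff_even] using hoz)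
    · exact h
  obtain ⟨d, rfl⟩ := hc
  have hd0 : d ≠ 0 := by rintro rfl; simp at h0
  have h1 : (1:ℤ) ≤ |d| := Int.one_le_abs (by exact_mod_cast hd0)
  have hp0 : (0:ℤ) ≤ (p:ℤ) := Int.natCast_nonneg p
  have : |(p:ℤ) * (d + d)| = (p:ℤ) * (2 * |d|) := by
    rw [abs_mul, abs_of_nonneg hp0]
    rw [show d + d = 2*d by ring, abs_mul]
    norm_num
  rw [this] at habs
  nlinarith

private lemma Gsum_zero (p : ℕ) (r : ℂ) : Gsum p r 0 = p := by
  simp [Gsum]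

private lemma Gsum_even (p : ℕ) (hp0 : p ≠ 0) (q : ℂ) (hprim : IsPrimitiveRoot q p)
    (m : ℤ) (hm : Even m) (hnd : ¬ (p : ℤ) ∣ m) : Gsum p (-q) m = 0 := by
  have hq0 : q ≠ 0 := hprim.ne_zero hp0
  have hre : (-q) ^ m = q ^ m := hm.neg_zpow q
  have hx1 : (-q) ^ m ≠ 1 := by
    rw [hre]
    intro h
    exact hnd ((hprim.zpow_eq_one_iff_dvd m).mp h)
  have hxp : ((-q) ^ m) ^ p = 1 := by
    rw [hre, ← zpow_natCast (q ^ m) p, ←  _root_.zpow_mul, mul_comm,  _root_.zpow_mul, zpow_natCast,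
      hprim.pow_eq_one,  _root_.one_zpow]
  have h := geom_sum_mul ((-q) ^ m) p
  rw [hxp, sub_self] at h
  have := mul_eq_zero.mp h
  rcases this with h' | h'
  · exact h'
  · exact absurd (sub_eq_zero.mp h') hx1

private lemma Gsum_odd (p : ℕ) (hp : p.Prime) (hodd : Odd p) (q : ℂ)
    (hprim : IsPrimitiveRoot q p) (m : ℤ) (hm : Odd m) :
    Gsum p (-q) m + Gsum p (-q) (-m) = 2 := by
  have hp0 : p ≠ 0 := hp.ne_zero
  have hq0 : q ≠ 0 := hprim.ne_zero hp0
  have hr0 : (-q) ≠ 0 := neg_ne_zero.mpr hq0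
  have hoz : Odd (p : ℤ) := by exact_mod_cast hodd
  have hrp : (-q) ^ (p : ℤ) = -1 := by
    rw [hoz.neg_zpow q, zpow_natCast, hprim.pow_eq_one]
  -- r^m ≠ 1 for odd m
  have hrm1 : (-q) ^ m ≠ 1 := by
    rw [hm.neg_zpow q]
    intro h
    have h2 : q ^ m = -1 := by linear_combination -h
    have h4 : q ^ (2 * m) = 1 := by
      rw [two_mul, zpow_add₀ hq0, h2]; ring
    have hd : (p : ℤ) ∣ 2 * m := (hprim.zpow_eq_one_iff_dvd _).mp h4
    have hpr : Prime (p : ℤ) := Nat.prime_iff_prime_int.mp hp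
    have hdm : (p : ℤ) ∣ m := by
      rcases (hpr.dvd_mul).mp hd with h' | h'
      · exfalso
        have := Int.le_of_dvd (by norm_num) h'
        have h3 : 3 ≤ p := by
          rcases hodd with ⟨t, ht⟩
          have := hp.two_le
          omega
        have : (3:ℤ) ≤ (p:ℤ) := by exact_mod_cast h3
        omega
      · exact h'
    have : q ^ m = 1 := (hprim.zpow_eq_one_iff_dvd m).mpr hdm
    rw [this] at h2; norm_num at h2
  -- reflection: Gsum p (-q) (-m) = -(-q)^m * Gsum p (-q) m
  have hrefl : Gsum p (-q) (-m) = -((-q) ^ m) * Gsum p (-q) m := by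
    unfold Gsum
    rw [← Finset.sum_range_reflect (fun j => ((-q) ^ (-m)) ^ j) p]
    rw [Finset.mul_sum]
    refine Finset.sum_congr rfl fun j hj => ?_
    have hj' : j < p := Finset.mem_range.mp hj
    have hcast : ((p - 1 - j : ℕ) : ℤ) = (p : ℤ) - 1 - (j : ℤ) := by omega
    rw [← zpow_natCast ((-q) ^ (-m)) (p - 1 - j), ←  _root_.zpow_mul, hcast,
      ← zpow_natCast ((-q) ^ m) j, ←  _root_.zpow_mul]
    have hexp : (-m) * ((p : ℤ) - 1 - (j : ℤ)) = (-m) * (p : ℤ) + m + m * (j : ℤ) := by ring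
    rw [hexp, zpow_add₀ hr0, zpow_add₀ hr0]
    have h1 : (-q) ^ ((-m) * (p : ℤ)) = -1 := by
      rw [mul_comm,  _root_.zpow_mul, hrp]
      exact (hm.neg).neg_one_zpow
    rw [h1]; ring
  have hgeom : Gsum p (-q) m * ((-q) ^ m - 1) = -2 := by
    have h := geom_sum_mul ((-q) ^ m) p
    have hxp : ((-q) ^ m) ^ p = -1 := by
      rw [← zpow_natCast ((-q) ^ m) p, ←  _root_.zpow_mul, mul_comm,  _root_.zpow_mul, hrp]
      exact hm.neg_one_zpow
    rw [hxp] at h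
    unfold Gsum
    rw [h]; ring
  have hfin : (Gsum p (-q) m + Gsum p (-q) (-m)) * ((-q) ^ m - 1)
      = 2 * ((-q) ^ m - 1) := by
    rw [hrefl]
    linear_combination (1 - (-q) ^ m) * hgeom
  exact mul_right_cancel₀ (sub_ne_zero.mpr hrm1) hfin

private lemma expand_y (y : ℂ) (hy : y ≠ 0) (u v : ℤ) :
    (y^u - y^(-u)) * (2 + y + y⁻¹) * (y^v - y^(-v)) =
    2*y^(u+v) + y^(u+v+1) + y^(u+v-1) + 2*y^(-u-v) + y^(-u-v+1) + y^(-u-v-1)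
    - (2*y^(u-v) + y^(u-v+1) + y^(u-v-1) + 2*y^(v-u) + y^(v-u+1) + y^(v-u-1)) := by
  simp only [zpow_add₀ hy, zpow_sub₀ hy, _root_.zpow_neg, zpow_one]
  ring

private lemma hy_eq (q : ℂ) (m : ℤ) (j : ℕ) : ((-q) ^ ((j : ℤ))) ^ m = ((-q) ^ m) ^ j := by
  rw [← zpow_natCast ((-q) ^ m) j, ← _root_.zpow_mul, ← _root_.zpow_mul, mul_comm]

private lemma Fterm_sum (p : ℕ) (q : ℂ) (hq0 : q ≠ 0) (I K : ℤ) :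
    ∑ j ∈ Finset.range p, Fterm q I K j =
    2*Gsum p (-q) (I+K) + Gsum p (-q) (I+K+1) + Gsum p (-q) (I+K-1)
    + 2*Gsum p (-q) (-I-K) + Gsum p (-q) (-I-K+1) + Gsum p (-q) (-I-K-1)
    - (2*Gsum p (-q) (I-K) + Gsum p (-q) (I-K+1) + Gsum p (-q) (I-K-1)
    + 2*Gsum p (-q) (K-I) + Gsum p (-q) (K-I+1) + Gsum p (-q) (K-I-1)) := by
  have hr0 : (-q) ≠ 0 := neg_ne_zero.mpr hq0
  have hexp : ∀ j : ℕ, Fterm q I K j =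
      2*((-q)^(I+K))^j + ((-q)^(I+K+1))^j + ((-q)^(I+K-1))^j
      + 2*((-q)^(-I-K))^j + ((-q)^(-I-K+1))^j + ((-q)^(-I-K-1))^j
      - (2*((-q)^(I-K))^j + ((-q)^(I-K+1))^j + ((-q)^(I-K-1))^j
      + 2*((-q)^(K-I))^j + ((-q)^(K-I+1))^j + ((-q)^(K-I-1))^j) := by
    intro j
    have e := expand_y ((-q) ^ ((j : ℤ))) (zpow_ne_zero _ hr0) I K
    simp only [hy_eq] at e
    exact e
  rw [Finset.sum_congr rfl (fun j _ => hexp j)]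
  unfold Gsum
  simp only [Finset.sum_add_distrib, Finset.sum_sub_distrib, ← Finset.mul_sum]

theorem C_eq_neg_inv_two_p_SQS (p : ℕ) (hp : p.Prime) (hodd : Odd p)
    (q : ℂ) (hq : q = Complex.exp (2 * Real.pi * Complex.I / p))
    (C S Q : Matrix (Fin (p - 1)) (Fin (p - 1)) ℂ)
    (hC : ∀ i j : Fin (p - 1), C i j =
      if (i : ℕ) = (j : ℕ) then 2
      else if (i : ℕ) + 1 = (j : ℕ) ∨ (j : ℕ) + 1 = (i : ℕ) then 1 else 0)
    (hS : ∀ i j : Fin (p - 1), S i j =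
      (-1 : ℂ) ^ (((i : ℕ) + 1) * ((j : ℕ) + 1)) *
        (q ^ (((i : ℕ) + 1) * ((j : ℕ) + 1)) - q⁻¹ ^ (((i : ℕ) + 1) * ((j : ℕ) + 1))))
    (hQ : ∀ i j : Fin (p - 1), Q i j =
      if i = j then 2 + (-1 : ℂ) ^ ((j : ℕ) + 1) * (q ^ ((j : ℕ) + 1) + q⁻¹ ^ ((j : ℕ) + 1))
      else 0) :
    C = (-(1 / (2 * (p : ℂ)))) • (S * Q * S) := by
  have hp0 : p ≠ 0 := hp.ne_zero
  have hprim : IsPrimitiveRoot q p := by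
    rw [hq]; exact Complex.isPrimitiveRoot_exp p hp0
  have hq0 : q ≠ 0 := hprim.ne_zero hp0
  have hr0 : (-q) ≠ 0 := neg_ne_zero.mpr hq0
  have hp3 : 3 ≤ p := by
    rcases hodd with ⟨t, ht⟩; have := hp.two_le; omega
  -- conversion of S entries
  have e3 : (-1:ℂ) * q⁻¹ = (-q)⁻¹ := by rw [inv_neg, neg_one_mul]
  have keyS : ∀ (a b : ℕ), (-1:ℂ)^(a*b) * (q^(a*b) - q⁻¹^(a*b))
      = ((-q)^((a:ℤ)))^b - ((-q)^(-(a:ℤ)))^b := by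
    intro a b
    have e1 : ((-q)^((a:ℤ)))^b = (-q)^(a*b) := by
      rw [← zpow_natCast ((-q)^((a:ℤ))) b, ← _root_.zpow_mul,
        show (a:ℤ) * (b:ℕ) = ((a*b : ℕ):ℤ) by push_cast; ring, zpow_natCast]
    have e2 : ((-q)^(-(a:ℤ)))^b = ((-q)^(a*b))⁻¹ := by
      rw [← zpow_natCast ((-q)^(-(a:ℤ))) b, ← _root_.zpow_mul,
        show (-(a:ℤ)) * (b:ℕ) = -((a*b : ℕ):ℤ) by push_cast; ring, _root_.zpow_neg,
        zpow_natCast]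
    rw [e1, e2, mul_sub, ← mul_pow, neg_one_mul, ← mul_pow, e3, inv_pow]
  have keyQ : ∀ b : ℕ, (2:ℂ) + (-1:ℂ)^b * (q^b + q⁻¹^b)
      = 2 + (-q)^((b:ℤ)) + ((-q)^((b:ℤ)))⁻¹ := by
    intro b
    rw [mul_add, ← mul_pow, neg_one_mul, ← mul_pow, e3, inv_pow, zpow_natCast]
    ring
  ext i k
  rw [Matrix.smul_apply, smul_eq_mul, hC]
  have hiK : ((i:ℕ):ℤ) < (p:ℤ) - 1 := by
    have := i.isLt; omega
  have hkK : ((k:ℕ):ℤ) < (p:ℤ) - 1 := by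
    have := k.isLt; omega
  set I : ℤ := (i:ℕ) + 1 with hIdef
  set K : ℤ := (k:ℕ) + 1 with hKdef
  have hentry : (S * Q * S) i k = ∑ j ∈ Finset.range p, Fterm q I K j := by
    rw [Matrix.mul_apply]
    have h1 : ∀ j : Fin (p-1), (S * Q) i j * S j k = Fterm q I K ((j:ℕ)+1) := by
      intro j
      have h2 : (S * Q) i j = S i j
          * (2 + (-1:ℂ)^((j:ℕ)+1) * (q^((j:ℕ)+1) + q⁻¹^((j:ℕ)+1))) := by
        rw [Matrix.mul_apply, Finset.sum_eq_single j]
        · rw [hQ]; simp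
        · intro b _ hb; rw [hQ]; simp [hb]
        · simp
      rw [h2, hS i j, hS j k]
      simp only [mul_comm ((j:ℕ)+1) ((k:ℕ)+1)]
      rw [keyS, keyS, keyQ]
      unfold Fterm
      rw [hIdef, hKdef]
      push_cast
      ring
    rw [Finset.sum_congr rfl (fun j _ => h1 j)]
    rw [Fin.sum_univ_eq_sum_range (fun j => Fterm q I K (j+1)) (p-1)]
    have hp1 : p - 1 + 1 = p := by omega
    have hF0 : Fterm q I K 0 = 0 := by simp [Fterm]
    calc ∑ j ∈ Finset.range (p-1), Fterm q I K (j+1)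
        = ∑ j ∈ Finset.range (p-1), Fterm q I K (j+1) + Fterm q I K 0 := by rw [hF0, add_zero]
      _ = ∑ j ∈ Finset.range (p-1+1), Fterm q I K j := (Finset.sum_range_succ' _ _).symm
      _ = ∑ j ∈ Finset.range p, Fterm q I K j := by rw [hp1]
  have hGE : ∀ m : ℤ, Even m → m ≠ 0 → |m| < 2*(p:ℤ) → Gsum p (-q) m = 0 := fun m hm h0 habs =>
    Gsum_even p hp0 q hprim m hm (aux_not_dvd p hodd m hm h0 habs)
  have hGO : ∀ m : ℤ, Odd m → Gsum p (-q) m + Gsum p (-q) (-m) = 2 :=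
    fun m hm => Gsum_odd p hp hodd q hprim m hm
  have habs' : ∀ m : ℤ, -(2*(p:ℤ)) < m → m < 2*(p:ℤ) → |m| < 2*(p:ℤ) :=
    fun m h1 h2 => abs_lt.mpr ⟨by omega, h2⟩
  have hI1 : 1 ≤ I := by omega
  have hIp : I ≤ (p:ℤ) - 1 := by omega
  have hK1 : 1 ≤ K := by omega
  have hKp : K ≤ (p:ℤ) - 1 := by omega
  have hpz : (3:ℤ) ≤ (p:ℤ) := by exact_mod_cast hp3
  have hpC : (p:ℂ) ≠ 0 := Nat.cast_ne_zero.mpr hp0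
  by_cases hik : I = K
  · -- diagonal
    have hik' : (i:ℕ) = (k:ℕ) := by omega
    have ha : Gsum p (-q) (I+K) = 0 :=
      hGE _ ⟨I, by omega⟩ (by omega) (habs' _ (by omega) (by omega))
    have hna : Gsum p (-q) (-I-K) = 0 :=
      hGE _ ⟨-I, by omega⟩ (by omega) (habs' _ (by omega) (by omega))
    have o1 : Gsum p (-q) (I+K+1) + Gsum p (-q) (-I-K-1) = 2 := by
      have h := hGO (I+K+1) ⟨I, by omega⟩
      rwa [show -(I+K+1) = -I-K-1 by ring] at h
    have o2 : Gsum p (-q) (I+K-1) + Gsum p (-q) (-I-K+1) = 2 := by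
      have h := hGO (I+K-1) ⟨I-1, by omega⟩
      rwa [show -(I+K-1) = -I-K+1 by ring] at h
    have hb0 : Gsum p (-q) (I-K) = (p:ℂ) := by
      rw [show I-K = (0:ℤ) by omega]; exact Gsum_zero p (-q)
    have hnb0 : Gsum p (-q) (K-I) = (p:ℂ) := by
      rw [show K-I = (0:ℤ) by omega]; exact Gsum_zero p (-q)
    have ob1 : Gsum p (-q) (I-K+1) + Gsum p (-q) (K-I-1) = 2 := by
      have h := hGO (I-K+1) ⟨0, by omega⟩
      rwa [show -(I-K+1) = K-I-1 by ring] at h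
    have ob2 : Gsum p (-q) (I-K-1) + Gsum p (-q) (K-I+1) = 2 := by
      have h := hGO (I-K-1) ⟨-1, by omega⟩
      rwa [show -(I-K-1) = K-I+1 by ring] at h
    have hE : (S * Q * S) i k = -4*(p:ℂ) := by
      rw [hentry, Fterm_sum p q hq0 I K]
      linear_combination 2*ha + 2*hna + o1 + o2 - 2*hb0 - 2*hnb0 - ob1 - ob2
    rw [if_pos hik', hE]
    field_simp
    ring
  · rcases Int.even_or_odd (I+K) with he | ho
    · -- both even, |I-K| ≥ 2
      obtain ⟨c, hc⟩ := he
      have ha : Gsum p (-q) (I+K) = 0 :=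
        hGE _ ⟨c, by omega⟩ (by omega) (habs' _ (by omega) (by omega))
      have hna : Gsum p (-q) (-I-K) = 0 :=
        hGE _ ⟨-c, by omega⟩ (by omega) (habs' _ (by omega) (by omega))
      have hb : Gsum p (-q) (I-K) = 0 :=
        hGE _ ⟨I-c, by omega⟩ (by omega) (habs' _ (by omega) (by omega))
      have hnb : Gsum p (-q) (K-I) = 0 :=
        hGE _ ⟨c-I, by omega⟩ (by omega) (habs' _ (by omega) (by omega))
      have o1 : Gsum p (-q) (I+K+1) + Gsum p (-q) (-I-K-1) = 2 := by
        have h := hGO (I+K+1) ⟨c, by omega⟩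
        rwa [show -(I+K+1) = -I-K-1 by ring] at h
      have o2 : Gsum p (-q) (I+K-1) + Gsum p (-q) (-I-K+1) = 2 := by
        have h := hGO (I+K-1) ⟨c-1, by omega⟩
        rwa [show -(I+K-1) = -I-K+1 by ring] at h
      have ob1 : Gsum p (-q) (I-K+1) + Gsum p (-q) (K-I-1) = 2 := by
        have h := hGO (I-K+1) ⟨I-c, by omega⟩
        rwa [show -(I-K+1) = K-I-1 by ring] at h
      have ob2 : Gsum p (-q) (I-K-1) + Gsum p (-q) (K-I+1) = 2 := by
        have h := hGO (I-K-1) ⟨I-c-1, by omega⟩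
        rwa [show -(I-K-1) = K-I+1 by ring] at h
      have hE : (S * Q * S) i k = 0 := by
        rw [hentry, Fterm_sum p q hq0 I K]
        linear_combination 2*ha + 2*hna + o1 + o2 - 2*hb - 2*hnb - ob1 - ob2
      rw [if_neg (by omega), if_neg (by omega), hE, mul_zero]
    · -- odd case
      obtain ⟨c, hc⟩ := ho
      have oa : Gsum p (-q) (I+K) + Gsum p (-q) (-I-K) = 2 := by
        have h := hGO (I+K) ⟨c, by omega⟩
        rwa [show -(I+K) = -I-K by ring] at h
      have ob : Gsum p (-q) (I-K) + Gsum p (-q) (K-I) = 2 := by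
        have h := hGO (I-K) ⟨c-K, by omega⟩
        rwa [show -(I-K) = K-I by ring] at h
      have e1 : Gsum p (-q) (I+K+1) = 0 :=
        hGE _ ⟨c+1, by omega⟩ (by omega) (habs' _ (by omega) (by omega))
      have e2 : Gsum p (-q) (I+K-1) = 0 :=
        hGE _ ⟨c, by omega⟩ (by omega) (habs' _ (by omega) (by omega))
      have e3 : Gsum p (-q) (-I-K+1) = 0 :=
        hGE _ ⟨-c, by omega⟩ (by omega) (habs' _ (by omega) (by omega))
      have e4 : Gsum p (-q) (-I-K-1) = 0 :=
        hGE _ ⟨-c-1, by omega⟩ (by omega) (habs' _ (by omega) (by omega))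
      by_cases hb1 : I - K = 1
      · have f1 : Gsum p (-q) (I-K+1) = 0 :=
          hGE _ ⟨1, by omega⟩ (by omega) (habs' _ (by omega) (by omega))
        have f2 : Gsum p (-q) (I-K-1) = (p:ℂ) := by
          rw [show I-K-1 = (0:ℤ) by omega]; exact Gsum_zero p (-q)
        have f3 : Gsum p (-q) (K-I+1) = (p:ℂ) := by
          rw [show K-I+1 = (0:ℤ) by omega]; exact Gsum_zero p (-q)
        have f4 : Gsum p (-q) (K-I-1) = 0 :=
          hGE _ ⟨-1, by omega⟩ (by omega) (habs' _ (by omega) (by omega))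
        have hE : (S * Q * S) i k = -2*(p:ℂ) := by
          rw [hentry, Fterm_sum p q hq0 I K]
          linear_combination 2*oa + e1 + e2 + e3 + e4 - 2*ob - f1 - f2 - f3 - f4
        rw [if_neg (by omega), if_pos (Or.inr (by omega)), hE]
        field_simp
      · by_cases hbm1 : I - K = -1
        · have f1 : Gsum p (-q) (I-K+1) = (p:ℂ) := by
            rw [show I-K+1 = (0:ℤ) by omega]; exact Gsum_zero p (-q)
          have f2 : Gsum p (-q) (I-K-1) = 0 :=
            hGE _ ⟨-1, by omega⟩ (by omega) (habs' _ (by omega) (by omega))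
          have f3 : Gsum p (-q) (K-I+1) = 0 :=
            hGE _ ⟨1, by omega⟩ (by omega) (habs' _ (by omega) (by omega))
          have f4 : Gsum p (-q) (K-I-1) = (p:ℂ) := by
            rw [show K-I-1 = (0:ℤ) by omega]; exact Gsum_zero p (-q)
          have hE : (S * Q * S) i k = -2*(p:ℂ) := by
            rw [hentry, Fterm_sum p q hq0 I K]
            linear_combination 2*oa + e1 + e2 + e3 + e4 - 2*ob - f1 - f2 - f3 - f4
          rw [if_neg (by omega), if_pos (Or.inl (by omega)), hE]
          field_simp
        · have f1 : Gsum p (-q) (I-K+1) = 0 :=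
            hGE _ ⟨c-K+1, by omega⟩ (by omega) (habs' _ (by omega) (by omega))
          have f2 : Gsum p (-q) (I-K-1) = 0 :=
            hGE _ ⟨c-K, by omega⟩ (by omega) (habs' _ (by omega) (by omega))
          have f3 : Gsum p (-q) (K-I+1) = 0 :=
            hGE _ ⟨K-c, by omega⟩ (by omega) (habs' _ (by omega) (by omega))
          have f4 : Gsum p (-q) (K-I-1) = 0 :=
            hGE _ ⟨K-c-1, by omega⟩ (by omega) (habs' _ (by omega) (by omega))
          have hE : (S * Q * S) i k = 0 := by
            rw [hentry, Fterm_sum p q hq0 I K]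
            linear_combination 2*oa + e1 + e2 + e3 + e4 - 2*ob - f1 - f2 - f3 - f4
          rw [if_neg (by omega), if_neg (by omega), hE, mul_zero]
end

section
/- Let p be an odd prime, q = exp(2πi/p), C the (p−1)×(p−1) tridiagonal matrix with 2 on the diagonal and 1 on the sub/super-diagonal, and g ≥ 1, 1 ≤ n ≤ p−1 integers. Then (C^g)_{n,1} = −(1/(2p)) · Σ_{j=1}^{p−1} (−1)^{(n+1)j} (q^{nj} − q^{−nj})(q^{j} − q^{−j}) (2 + (−1)^j(q^{j} + q^{−j}))^g. -/
open Finset Matrix Complex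

noncomputable def Sfun (p : ℕ) (q : ℂ) (g n : ℕ) : ℂ :=
  ∑ j ∈ Icc 1 (p-1),
    (-1 : ℂ) ^ ((n + 1) * j) * (q ^ (n * j) - q⁻¹ ^ (n * j)) * (q ^ j - q⁻¹ ^ j) *
      (2 + (-1 : ℂ) ^ j * (q ^ j + q⁻¹ ^ j)) ^ g

lemma insert_zero_Icc (p : ℕ) (hp : 1 ≤ p) : insert 0 (Icc 1 (p-1)) = range p := by
  ext x; simp only [Finset.mem_insert, Finset.mem_Icc, Finset.mem_range]; omega

lemma geom_one_aux (p : ℕ) (hp : 1 ≤ p) (w : ℂ) (hw : w^p = 1) (hw1 : w ≠ 1) :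
    ∑ j ∈ Icc 1 (p-1), w^j = -1 := by
  have h0 : (0:ℕ) ∉ Icc 1 (p-1) := by simp
  have h := Finset.sum_insert (f := fun j => w^j) h0
  rw [insert_zero_Icc p hp, geom_sum_eq hw1, hw] at h
  simp only [sub_self, zero_div, pow_zero] at h
  linear_combination -h

lemma geom_negone_aux (p : ℕ) (hp : 1 ≤ p) (w : ℂ) (hw : w^p = -1) :
    ∑ j ∈ Icc 1 (p-1), (w^j + w⁻¹^j) = 0 := by
  have hw0 : w ≠ 0 := by
    intro h; rw [h, zero_pow (by omega)] at hw; norm_num at hw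
  have hw1 : w ≠ 1 := by intro h; rw [h, one_pow] at hw; norm_num at hw
  have hwi1 : w⁻¹ ≠ 1 := by
    intro h; rw [inv_eq_one] at h; exact hw1 h
  have hwi : w⁻¹^p = -1 := by rw [inv_pow, hw]; norm_num
  have h0 : (0:ℕ) ∉ Icc 1 (p-1) := by simp
  have h : ∑ j ∈ insert 0 (Icc 1 (p-1)) , (w^j + w⁻¹^j)
      = (w^0 + w⁻¹^0) + ∑ j ∈ Icc 1 (p-1), (w^j + w⁻¹^j) :=
    Finset.sum_insert h0
  rw [insert_zero_Icc p hp, Finset.sum_add_distrib, geom_sum_eq hw1, geom_sum_eq hwi1,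
    hw, hwi] at h
  have hd1 : w - 1 ≠ 0 := sub_ne_zero.mpr hw1
  have hd2 : w⁻¹ - 1 ≠ 0 := sub_ne_zero.mpr hwi1
  have key : (-1 - 1) / (w - 1) + (-1 - 1) / (w⁻¹ - 1) = 2 := by
    rw [div_add_div _ _ hd1 hd2, div_eq_iff (mul_ne_zero hd1 hd2)]
    field_simp
    ring
  rw [key] at h
  simp only [pow_zero] at h
  linear_combination -h

lemma pair_sum_one (p : ℕ) (hp : 1 ≤ p) (w : ℂ) (hw : w^p = 1) (hw1 : w ≠ 1) :
    ∑ j ∈ Icc 1 (p-1), (w^j + w⁻¹^j) = -2 := by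
  rw [Finset.sum_add_distrib, geom_one_aux p hp w hw hw1,
    geom_one_aux p hp w⁻¹ (by rw [inv_pow, hw, inv_one]) (by rwa [Ne, inv_eq_one])]
  norm_num

lemma term_base_aux (q : ℂ) (hq0 : q ≠ 0) (m j : ℕ) :
    (-1:ℂ)^((m+2)*j) * (q^((m+1)*j) - q⁻¹^((m+1)*j)) * (q^j - q⁻¹^j)
    = ((-1:ℂ)^(m+2)*q^(m+2))^j + ((-1:ℂ)^(m+2)*q⁻¹^(m+2))^j
      - ((-1:ℂ)^(m+2)*q^m)^j - ((-1:ℂ)^(m+2)*q⁻¹^m)^j := by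
  have hQR : q^j * q⁻¹^j = 1 := by
    rw [inv_pow, mul_inv_cancel₀ (pow_ne_zero _ hq0)]
  have h1 : ∀ k : ℕ, (-1:ℂ)^(k*j) = ((-1:ℂ)^j)^k := fun k => by rw [mul_comm, pow_mul]
  have h2 : ∀ k : ℕ, q^(k*j) = (q^j)^k := fun k => by rw [mul_comm, pow_mul]
  have h3 : ∀ k : ℕ, q⁻¹^(k*j) = (q⁻¹^j)^k := fun k => by rw [mul_comm, pow_mul]
  have h1' : ∀ k : ℕ, ((-1:ℂ)^k)^j = ((-1:ℂ)^j)^k := fun k => pow_right_comm _ _ _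
  have h2' : ∀ k : ℕ, (q^k)^j = (q^j)^k := fun k => pow_right_comm _ _ _
  have h3' : ∀ k : ℕ, (q⁻¹^k)^j = (q⁻¹^j)^k := fun k => pow_right_comm _ _ _
  simp only [mul_pow, h1, h2, h3, h1', h2', h3', pow_succ]
  set E := ((-1:ℂ)^j)
  set Q := q^j
  set R := q⁻¹^j
  linear_combination (-(E^m*E*E*(Q^m + R^m))) * hQR

lemma term_rec_aux (q : ℂ) (hq0 : q ≠ 0) (m j g : ℕ) :
    (-1:ℂ)^((m+1)*j) * (q^(m*j) - q⁻¹^(m*j)) * (q^j - q⁻¹^j) * (2 + (-1:ℂ)^j*(q^j+q⁻¹^j))^g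
    + 2 * ((-1:ℂ)^((m+2)*j) * (q^((m+1)*j) - q⁻¹^((m+1)*j)) * (q^j - q⁻¹^j) * (2 + (-1:ℂ)^j*(q^j+q⁻¹^j))^g)
    + (-1:ℂ)^((m+3)*j) * (q^((m+2)*j) - q⁻¹^((m+2)*j)) * (q^j - q⁻¹^j) * (2 + (-1:ℂ)^j*(q^j+q⁻¹^j))^g
    = (-1:ℂ)^((m+2)*j) * (q^((m+1)*j) - q⁻¹^((m+1)*j)) * (q^j - q⁻¹^j) * (2 + (-1:ℂ)^j*(q^j+q⁻¹^j))^(g+1) := by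
  have hE : ((-1:ℂ)^j) * ((-1:ℂ)^j) = 1 := by
    rw [← pow_add, ← two_mul, pow_mul]; norm_num
  have hQR : q^j * q⁻¹^j = 1 := by
    rw [inv_pow, mul_inv_cancel₀ (pow_ne_zero _ hq0)]
  set E := ((-1:ℂ)^j)
  set Q := q^j
  set R := q⁻¹^j
  set L := (2 + E*(Q+R)) with hL
  have h1 : ∀ k : ℕ, (-1:ℂ)^(k*j) = E^k := fun k => by rw [mul_comm, pow_mul]
  have h2 : ∀ k : ℕ, q^(k*j) = Q^k := fun k => by rw [mul_comm, pow_mul]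
  have h3 : ∀ k : ℕ, q⁻¹^(k*j) = R^k := fun k => by rw [mul_comm, pow_mul]
  simp only [h1, h2, h3, pow_succ]
  linear_combination (-(E^m*(Q-R)*L^g*(Q^m - R^m)*E)) * hE
    + (-(E^m*(Q-R)*L^g*(Q^m-R^m)*E*E*E)) * hQR

lemma Sfun_zero (p : ℕ) (q : ℂ) (g : ℕ) : Sfun p q g 0 = 0 := by
  unfold Sfun
  simp

lemma Sfun_p (p : ℕ) (q : ℂ) (hqp : q ^ p = 1) (g : ℕ) : Sfun p q g p = 0 := by
  unfold Sfun
  apply Finset.sum_eq_zero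
  intro j _
  have h1 : q ^ (p * j) = 1 := by rw [pow_mul, hqp, one_pow]
  have h2 : q⁻¹ ^ (p * j) = 1 := by
    rw [inv_pow, pow_mul, hqp, one_pow, inv_one]
  rw [h1, h2]
  ring

lemma Sfun_rec (p : ℕ) (q : ℂ) (hq0 : q ≠ 0) (g n : ℕ) (hn : 1 ≤ n) :
    Sfun p q (g+1) n = Sfun p q g (n-1) + 2 * Sfun p q g n + Sfun p q g (n+1) := by
  obtain ⟨m, rfl⟩ : ∃ m, n = m + 1 := ⟨n - 1, by omega⟩
  unfold Sfun
  rw [Finset.mul_sum, ← Finset.sum_add_distrib, ← Finset.sum_add_distrib]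
  apply Finset.sum_congr rfl
  intro j _
  simp only [Nat.add_sub_cancel]
  have := term_rec_aux q hq0 m j g
  convert this.symm using 3

lemma Sfun_base (p : ℕ) (hp : p.Prime) (hodd : Odd p) (q : ℂ)
    (hprim : IsPrimitiveRoot q p) (n : ℕ) (hn1 : 1 ≤ n) (hn2 : n ≤ p - 1) :
    Sfun p q 0 n = if n = 1 then -2*(p:ℂ) else 0 := by
  have hp3 : 3 ≤ p := by
    rcases hodd with ⟨k, hk⟩
    have := hp.two_le
    omega
  have hq0 : q ≠ 0 := hprim.ne_zero (by omega)
  have hqp : q ^ p = 1 := hprim.pow_eq_one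
  have hdvd : ∀ a : ℕ, (q ^ a = 1 ↔ p ∣ a) := fun a => hprim.pow_eq_one_iff_dvd a
  have hnd : ∀ a : ℕ, 1 ≤ a → a ≤ p - 1 → q ^ a ≠ 1 := by
    intro a h1 h2 h
    rw [hdvd] at h
    have := Nat.le_of_dvd (by omega) h
    omega
  obtain ⟨m, rfl⟩ : ∃ m, n = m + 1 := ⟨n - 1, by omega⟩
  have hsplit : Sfun p q 0 (m+1)
      = (∑ j ∈ Icc 1 (p-1), (((-1:ℂ)^(m+2)*q^(m+2))^j + (((-1:ℂ)^(m+2)*q^(m+2))⁻¹)^j))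
      - (∑ j ∈ Icc 1 (p-1), (((-1:ℂ)^(m+2)*q^m)^j + (((-1:ℂ)^(m+2)*q^m)⁻¹)^j)) := by
    unfold Sfun
    rw [← Finset.sum_sub_distrib]
    apply Finset.sum_congr rfl
    intro j _
    have hinv : ∀ a : ℕ, ((-1:ℂ)^(m+2)*q^a)⁻¹ = (-1:ℂ)^(m+2)*q⁻¹^a := by
      intro a
      rw [mul_inv, ← inv_pow, ← inv_pow, inv_neg, inv_one]
    rw [hinv, hinv, pow_zero, mul_one, show m+1+1 = m+2 from rfl]
    rw [term_base_aux q hq0 m j]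
    ring
  rcases Nat.even_or_odd m with hme | hmo
  · -- m even, n = m+1 odd
    have hsign : ((-1:ℂ))^(m+2) = 1 := (hme.add (by norm_num)).neg_one_pow
    rw [hsign, one_mul, one_mul] at hsplit
    rcases Nat.eq_zero_or_pos m with rfl | hm1
    · -- n = 1
      have h2 : q^2 ≠ 1 := hnd 2 (by omega) (by omega)
      have h2p : (q^2)^p = 1 := by rw [← pow_mul, mul_comm, pow_mul, hqp, one_pow]
      rw [if_pos rfl]
      rw [hsplit, pair_sum_one p (by omega) _ h2p h2]
      have : ∑ j ∈ Icc 1 (p-1), ((q^0:ℂ)^j + ((q^0:ℂ)⁻¹)^j) = 2*((p:ℂ)-1) := by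
        simp only [pow_zero, inv_one, one_pow]
        rw [Finset.sum_const, Nat.card_Icc, nsmul_eq_mul,
          show p - 1 + 1 - 1 = p - 1 from by omega, Nat.cast_sub (by omega)]
        push_cast
        ring
      rw [this]
      ring
    · -- m even ≥ 2, n odd ≥ 3
      have hmle : m + 2 ≤ p - 1 := by
        rcases hodd with ⟨k, hk⟩
        rcases hme with ⟨l, hl⟩
        omega
      have h1 : q^(m+2) ≠ 1 := hnd (m+2) (by omega) hmle
      have h1p : (q^(m+2))^p = 1 := by rw [← pow_mul, mul_comm, pow_mul, hqp, one_pow]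
      have h2 : q^m ≠ 1 := hnd m (by omega) (by omega)
      have h2p : (q^m)^p = 1 := by rw [← pow_mul, mul_comm, pow_mul, hqp, one_pow]
      rw [if_neg (by omega), hsplit, pair_sum_one p (by omega) _ h1p h1,
        pair_sum_one p (by omega) _ h2p h2]
      ring
  · -- m odd, n = m+1 even
    have hsign : ((-1:ℂ))^(m+2) = -1 := (hmo.add_even (by norm_num)).neg_one_pow
    rw [hsign] at hsplit
    have hps : ∀ a : ℕ, ((-1:ℂ) * q^a)^p = -1 := by
      intro a
      rw [mul_pow, ← pow_mul, mul_comm a, pow_mul, hqp, one_pow, mul_one, hodd.neg_one_pow]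
    rw [if_neg (by rcases hmo with ⟨k, hk⟩; omega), hsplit,
      geom_negone_aux p (by omega) _ (hps (m+2)), geom_negone_aux p (by omega) _ (hps m)]
    ring

theorem Cpow_entry_sum_formula (p : ℕ) (hp : p.Prime) (hodd : Odd p)
    (q : ℂ) (hq : q = Complex.exp (2 * Real.pi * Complex.I / p))
    (C : Matrix (Fin (p - 1)) (Fin (p - 1)) ℂ)
    (hC : ∀ i j : Fin (p - 1), C i j =
      if (i : ℕ) = (j : ℕ) then 2
      else if (i : ℕ) + 1 = (j : ℕ) ∨ (j : ℕ) + 1 = (i : ℕ) then 1 else 0)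
    (g n : ℕ) (hg : 1 ≤ g) (hn1 : 1 ≤ n) (hn2 : n ≤ p - 1) :
    (C ^ g) ⟨n - 1, by have := hp.two_le; omega⟩ ⟨0, by have := hp.two_le; omega⟩ =
      (-(1 / (2 * (p : ℂ)))) * ∑ j ∈ Finset.Icc 1 (p - 1),
        (-1 : ℂ) ^ ((n + 1) * j) * (q ^ (n * j) - q⁻¹ ^ (n * j)) * (q ^ j - q⁻¹ ^ j) *
          (2 + (-1 : ℂ) ^ j * (q ^ j + q⁻¹ ^ j)) ^ g := by
  have hp3 : 3 ≤ p := by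
    rcases hodd with ⟨k, hk⟩
    have := hp.two_le
    omega
  have hprim : IsPrimitiveRoot q p := by
    rw [hq]; exact Complex.isPrimitiveRoot_exp p (by omega)
  have hq0 : q ≠ 0 := hprim.ne_zero (by omega)
  have hqp : q ^ p = 1 := hprim.pow_eq_one
  have hpc : (p:ℂ) ≠ 0 := Nat.cast_ne_zero.mpr (by omega)
  have key : ∀ g : ℕ, ∀ n : ℕ, ∀ _h1 : 1 ≤ n, ∀ _h2 : n ≤ p - 1,
      (C ^ g) ⟨n - 1, by omega⟩ ⟨0, by omega⟩ = (-(1 / (2 * (p : ℂ)))) * Sfun p q g n := by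
    intro g
    induction g with
    | zero =>
      intro n h1 h2
      rw [pow_zero, Matrix.one_apply, Sfun_base p hp hodd q hprim n h1 h2]
      by_cases hn : n = 1
      · subst hn
        rw [if_pos rfl, if_pos rfl]
        field_simp
      · rw [if_neg (by simp only [Fin.ext_iff]; omega), if_neg hn, mul_zero]
    | succ g ih =>
      intro n h1 h2
      obtain ⟨m, rfl⟩ : ∃ m, n = m + 1 := ⟨n - 1, by omega⟩
      simp only [Nat.add_sub_cancel] at *
      set X : Fin (p-1) → ℂ := fun k => (C ^ g) k ⟨0, by omega⟩ with hX
      rw [pow_succ', Matrix.mul_apply]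
      have hve : ∀ k : Fin (p - 1), C ⟨m, by omega⟩ k * X k =
          (if k = (⟨m, by omega⟩ : Fin (p-1)) then 2 * X k else 0)
          + ((if (k:ℕ) + 1 = m then X k else 0)
          + (if (k:ℕ) = m + 1 then X k else 0)) := by
        intro k
        rw [hC]
        simp only [Fin.ext_iff]
        split_ifs <;> first | ring1 | (exfalso; omega)
      rw [Finset.sum_congr rfl (fun k _ => hve k), Finset.sum_add_distrib,
        Finset.sum_add_distrib, Finset.sum_ite_eq']
      have e1 : (if (⟨m, by omega⟩ : Fin (p-1)) ∈ Finset.univ then 2 * X ⟨m, by omega⟩ else 0)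
          = 2 * ((-(1 / (2 * (p : ℂ)))) * Sfun p q g (m+1)) := by
        rw [if_pos (Finset.mem_univ _)]
        have := ih (m+1) (by omega) (by omega)
        simp only [Nat.add_sub_cancel] at this
        exact congrArg (fun z => 2 * z) this
      have e2 : (∑ k : Fin (p-1), if (k:ℕ) + 1 = m then X k else 0)
          = (-(1 / (2 * (p : ℂ)))) * Sfun p q g m := by
        rcases Nat.eq_zero_or_pos m with rfl | hm
        · rw [Finset.sum_eq_zero (fun k _ => if_neg (by omega)), Sfun_zero, mul_zero]
        · rw [Finset.sum_eq_single_of_mem (⟨m - 1, by omega⟩ : Fin (p-1)) (Finset.mem_univ _)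
            (fun b _ hb => if_neg (fun hh => hb (Fin.ext (by simp only [Fin.ext_iff] at hh ⊢; omega))))]
          rw [if_pos (by simp only []; omega)]
          exact ih m hm (by omega)
      have e3 : (∑ k : Fin (p-1), if (k:ℕ) = m + 1 then X k else 0)
          = (-(1 / (2 * (p : ℂ)))) * Sfun p q g (m+2) := by
        by_cases hlt : m + 1 < p - 1
        · rw [Finset.sum_eq_single_of_mem (⟨m + 1, by omega⟩ : Fin (p-1)) (Finset.mem_univ _)
            (fun b _ hb => if_neg (fun hh => hb (Fin.ext (by simp only [Fin.ext_iff] at hh ⊢; omega))))]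
          rw [if_pos (by simp only [])]
          have := ih (m+2) (by omega) (by omega)
          simp only [show m + 2 - 1 = m + 1 from by omega] at this
          exact this
        · have hmp : m + 2 = p := by omega
          rw [Finset.sum_eq_zero
              (fun k _ => if_neg (by have := k.isLt; simp only [Fin.ext_iff] at *; omega)),
            hmp, Sfun_p p q hqp, mul_zero]
      rw [e1, e2, e3, Sfun_rec p q hq0 g (m+1) (by omega)]
      simp only [Nat.add_sub_cancel]
      ring
  have h := key g n hn1 hn2
  rw [h, Sfun]
end

section
/- Let p be an odd prime and set D_g = (p/4)^{g−1} · Σ_{j=1}^{(p−1)/2} sin(πj/p)^{2−2g} (the Verlinde number with c = 0). Then D_g can be written as D_g = −(1/p) Σ_{j=1}^{(p−1)/2} G_j( (q − q^{−1})² · (−p/(q−q^{−1})²)^g ), where q = exp(2πi/p) and G_j is the Galois automorphism of ℚ(q) sending q to q^j; in particular D_g is a rational number (in fact a positive integer for the standard Verlinde formula). -/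
open Finset Complex

lemma aux_reindex (p m : ℕ) (hpm : p = 2 * m + 1) (f : ℝ → ℝ) :
    ∑ j ∈ Icc 1 m, f (Real.sin (2 * Real.pi * j / p)) =
      ∑ j ∈ Icc 1 m, f (Real.sin (Real.pi * j / p)) := by
  have hp0 : (p : ℝ) ≠ 0 := Nat.cast_ne_zero.mpr (by omega)
  refine Finset.sum_nbij' (fun a => if 2 * a ≤ m then 2 * a else p - 2 * a)
    (fun b => if b % 2 = 0 then b / 2 else (p - b) / 2) ?_ ?_ ?_ ?_ ?_
  · intro a ha; simp only [mem_Icc] at *; split <;> omega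
  · intro b hb; simp only [mem_Icc] at *; split <;> omega
  · intro a ha; simp only [mem_Icc] at ha; split <;> split <;> omega
  · intro b hb; simp only [mem_Icc] at hb; split <;> split <;> omega
  · intro a ha
    simp only [mem_Icc] at ha
    congr 1
    split
    · congr 1; push_cast; ring
    · have h2a : 2 * a ≤ p := by omega
      have h1 : ((p - 2 * a : ℕ) : ℝ) = p - 2 * a := by push_cast [h2a]; ring
      rw [h1]
      have h2 : Real.pi * ((p:ℝ) - 2 * a) / p = Real.pi - 2 * Real.pi * a / p := by
        field_simp
      rw [h2, Real.sin_pi_sub]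

theorem verlinde_aux1 (p : ℕ) (hp : p.Prime) (hodd : Odd p)
    (q : ℂ) (hq : q = Complex.exp (2 * Real.pi * Complex.I / p))
    (g : ℕ) (hg : 1 ≤ g) (D : ℝ)
    (hD : D = ((p : ℝ) / 4) ^ (g - 1) *
      ∑ j ∈ Finset.Icc 1 ((p - 1) / 2), Real.sin (Real.pi * j / p) ^ ((2 : ℤ) - 2 * g)) :
    ((D : ℂ) = -(1 / (p : ℂ)) * ∑ j ∈ Finset.Icc 1 ((p - 1) / 2),
        (q ^ j - q⁻¹ ^ j) ^ 2 * (-(p : ℂ) / (q ^ j - q⁻¹ ^ j) ^ 2) ^ g) := by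
  obtain ⟨k, rfl⟩ : ∃ k, g = k + 1 := ⟨g - 1, by omega⟩
  obtain ⟨m, hpm⟩ := hodd
  have hp3 : 3 ≤ p := by rcases hp.two_le.lt_or_eq with h | h; omega; omega
  have hm2 : (p - 1) / 2 = m := by omega
  have hpR : (0 : ℝ) < p := by positivity
  have hpC : (p : ℂ) ≠ 0 := Nat.cast_ne_zero.mpr (by omega)
  rw [hm2] at hD ⊢
  have hzpow : ∀ x : ℝ, x ^ ((2 : ℤ) - 2 * (k + 1 : ℕ)) = ((x ^ 2)⁻¹) ^ k := by
    intro x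
    have : ((2 : ℤ) - 2 * (k + 1 : ℕ)) = -(2 * k : ℕ) := by push_cast; ring
    rw [this, zpow_neg, zpow_natCast, pow_mul, inv_pow]
  have hD' : D = ((p : ℝ) / 4) ^ k *
      ∑ j ∈ Icc 1 m, ((Real.sin (2 * Real.pi * j / p) ^ 2)⁻¹) ^ k := by
    rw [hD, Nat.add_sub_cancel]
    congr 1
    trans (∑ j ∈ Icc 1 m, ((Real.sin (Real.pi * j / p) ^ 2)⁻¹) ^ k)
    · exact Finset.sum_congr rfl fun j _ => hzpow _
    · exact (aux_reindex p m hpm fun x => ((x ^ 2)⁻¹) ^ k).symm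
  have key : ∀ j ∈ Icc 1 m,
      (q ^ j - q⁻¹ ^ j) ^ 2 * (-(p : ℂ) / (q ^ j - q⁻¹ ^ j) ^ 2) ^ (k + 1) =
        (-(p : ℂ) * ((p : ℂ) / 4) ^ k) * (((Real.sin (2 * Real.pi * j / p) : ℂ) ^ 2)⁻¹) ^ k := by
    intro j hj
    simp only [mem_Icc] at hj
    set θ : ℝ := 2 * Real.pi * j / p with hθ
    have hqj : q ^ j - q⁻¹ ^ j = 2 * (Real.sin θ : ℂ) * I := by
      rw [hq, ← Complex.exp_nat_mul, ← Complex.exp_neg, ← Complex.exp_nat_mul]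
      have e1 : (j : ℂ) * (2 * Real.pi * Complex.I / p) = (θ : ℂ) * I := by
        rw [hθ]; push_cast; ring
      have e2 : (j : ℂ) * -(2 * Real.pi * Complex.I / p) = -((θ : ℂ) * I) := by
        rw [hθ]; push_cast; ring
      rw [e1, e2]
      rw [Complex.ofReal_sin, Complex.sin]
      field_simp
      ring_nf
      rw [Complex.I_sq]
      ring
    have hjR : (0 : ℝ) < j := by exact_mod_cast hj.1
    have hjm : (j : ℝ) ≤ m := by exact_mod_cast hj.2
    have hpmR : (p : ℝ) = 2 * m + 1 := by exact_mod_cast congrArg (Nat.cast : ℕ → ℝ) hpm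
    have hs : Real.sin θ ≠ 0 := by
      have h1 : 0 < θ := by
        rw [hθ]
        exact div_pos (by nlinarith [Real.pi_pos]) hpR
      have h2 : θ < Real.pi := by
        rw [hθ, div_lt_iff₀ hpR]
        nlinarith [Real.pi_pos]
      exact ne_of_gt (Real.sin_pos_of_pos_of_lt_pi h1 h2)
    have hsC : (Real.sin θ : ℂ) ≠ 0 := Complex.ofReal_ne_zero.mpr hs
    set s : ℂ := (Real.sin θ : ℂ) with hsdef
    have hs2 : s ^ 2 ≠ 0 := pow_ne_zero 2 hsC
    have hA : (q ^ j - q⁻¹ ^ j) ^ 2 = -4 * s ^ 2 := by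
      rw [hqj]
      ring_nf
      rw [Complex.I_sq]
      ring
    rw [hA]
    have e2 : -(p : ℂ) / (-4 * s ^ 2) = ((p : ℂ) / 4) * (s ^ 2)⁻¹ := by
      rw [div_eq_iff (by simpa using hs2)]
      field_simp
    rw [e2, pow_succ (((p : ℂ) / 4) * (s ^ 2)⁻¹) k]
    have e1 : (-4 : ℂ) * s ^ 2 * (((p : ℂ) / 4) * (s ^ 2)⁻¹) = -(p : ℂ) := by
      field_simp
    calc (-4 : ℂ) * s ^ 2 * ((((p : ℂ) / 4) * (s ^ 2)⁻¹) ^ k * (((p : ℂ) / 4) * (s ^ 2)⁻¹))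
        = ((-4 : ℂ) * s ^ 2 * (((p : ℂ) / 4) * (s ^ 2)⁻¹)) * (((p : ℂ) / 4) * (s ^ 2)⁻¹) ^ k := by
          ring
      _ = -(p : ℂ) * (((p : ℂ) / 4) ^ k * ((s ^ 2)⁻¹) ^ k) := by rw [e1, mul_pow]
      _ = (-(p : ℂ) * ((p : ℂ) / 4) ^ k) * ((s ^ 2)⁻¹) ^ k := by ring
  rw [Finset.sum_congr rfl key, ← Finset.mul_sum, hD']
  push_cast
  field_simp

theorem verlinde_aux2 (p : ℕ) (hp : p.Prime) (m : ℕ) (hpm : p = 2 * m + 1) (hp3 : 3 ≤ p)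
    (q : ℂ) (hq : q = Complex.exp (2 * Real.pi * Complex.I / p)) (g : ℕ) :
    ∃ r : ℚ, (r : ℂ) = ∑ j ∈ Finset.Icc 1 m,
      ((q ^ j - q⁻¹ ^ j) ^ 2 * (-(p : ℂ) / (q ^ j - q⁻¹ ^ j) ^ 2) ^ g) := by
  set n : ℕ+ := ⟨p, hp.pos⟩ with hn
  haveI : NeZero (n : ℕ) := ⟨n.ne_zero⟩
  set K := CyclotomicField n ℚ with hK
  haveI : IsCyclotomicExtension {(n : ℕ)} ℚ K :=
    haveI : NeZero ((n : ℕ) : ℚ) := ⟨Nat.cast_ne_zero.mpr n.ne_zero⟩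
    CyclotomicField.isCyclotomicExtension (n : ℕ) ℚ
  haveI : FiniteDimensional ℚ K := IsCyclotomicExtension.finiteDimensional {(n : ℕ)} ℚ K
  set ζ : K := IsCyclotomicExtension.zeta n ℚ K with hζdef
  have hζ := IsCyclotomicExtension.zeta_spec n ℚ K
  have hirr : Irreducible (Polynomial.cyclotomic n ℚ) := Polynomial.cyclotomic.irreducible_rat n.pos
  set x : K := (ζ - ζ⁻¹) ^ 2 * (-(p : K) / (ζ - ζ⁻¹) ^ 2) ^ g with hx
  refine ⟨Algebra.trace ℚ K x / 2, ?_⟩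
  have htr : algebraMap ℚ ℂ (Algebra.trace ℚ K x) = ∑ σ : K →ₐ[ℚ] ℂ, σ x :=
    trace_eq_sum_embeddings ℂ
  set F : ℂ → ℂ := fun z => (z - z⁻¹) ^ 2 * (-(p : ℂ) / (z - z⁻¹) ^ 2) ^ g with hF
  have hembed : ∑ σ : K →ₐ[ℚ] ℂ, σ x = ∑ μ ∈ primitiveRoots p ℂ, F μ := by
    rw [← Finset.sum_coe_sort (primitiveRoots p ℂ) F]
    refine Fintype.sum_equiv (hζ.embeddingsEquivPrimitiveRoots ℂ hirr) _ _ fun σ => ?_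
    have : ((hζ.embeddingsEquivPrimitiveRoots ℂ hirr σ : ℂ)) = σ ζ :=
      hζ.embeddingsEquivPrimitiveRoots_apply_coe ℂ hirr σ
    rw [hx, hF]
    simp only [map_mul, map_pow, map_sub, map_inv₀, map_div₀, map_neg, map_natCast, this]
    rw [show σ (p : K) = (p : ℂ) from map_natCast σ p]
  have hq_prim : IsPrimitiveRoot q p := by
    rw [hq]; exact Complex.isPrimitiveRoot_exp p (by omega)
  have h2 : ∑ μ ∈ primitiveRoots p ℂ, F μ = ∑ j ∈ Finset.Icc 1 (p - 1), F (q ^ j) := by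
    refine (Finset.sum_nbij (fun j => q ^ j) ?_ ?_ ?_ ?_).symm
    · intro a ha
      simp only [mem_Icc] at ha
      rw [mem_primitiveRoots hp.pos]
      exact hq_prim.pow_of_coprime a
        (Nat.Coprime.symm (hp.coprime_iff_not_dvd.mpr
          (Nat.not_dvd_of_pos_of_lt (by omega) (by omega))))
    · intro a ha b hb hab
      simp only [Finset.coe_Icc, Set.mem_Icc] at ha hb
      exact hq_prim.pow_inj (by omega) (by omega) hab
    · intro μ hμ
      have hμ' : IsPrimitiveRoot μ p := by
        rw [← mem_primitiveRoots hp.pos]; exact_mod_cast hμ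
      haveI : NeZero p := ⟨by omega⟩
      obtain ⟨i, hi, hqi⟩ := hq_prim.eq_pow_of_pow_eq_one hμ'.pow_eq_one
      have hi0 : i ≠ 0 := by
        rintro rfl
        have h1 : μ = 1 := by rw [← hqi, pow_zero]
        have := hμ'.dvd_of_pow_eq_one 1 (by rw [pow_one, h1])
        rw [Nat.dvd_one] at this
        omega
      refine ⟨i, ?_, hqi⟩
      simp only [Finset.coe_Icc, Set.mem_Icc]
      omega
    · intro j hj; rfl
  have hFinv : ∀ y : ℂ, F y⁻¹ = F y := by
    intro y
    rw [hF]
    simp only [inv_inv]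
    rw [show (y⁻¹ - y) ^ 2 = (y - y⁻¹) ^ 2 by ring]
  have h3 : ∑ j ∈ Finset.Icc 1 (p - 1), F (q ^ j) =
      2 * ∑ j ∈ Finset.Icc 1 m, F (q ^ j) := by
    have hsplit : Finset.Icc 1 (p - 1) = Finset.Icc 1 m ∪ Finset.Ioc m (p - 1) := by
      ext a
      simp only [mem_Icc, mem_union, mem_Ioc]
      omega
    have hdisj : Disjoint (Finset.Icc 1 m) (Finset.Ioc m (p - 1)) := by
      rw [Finset.disjoint_left]
      intro a ha hb
      simp only [mem_Icc, mem_Ioc] at ha hb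
      omega
    rw [hsplit, Finset.sum_union hdisj]
    have hswap : ∑ j ∈ Finset.Ioc m (p - 1), F (q ^ j) = ∑ j ∈ Finset.Icc 1 m, F (q ^ j) := by
      refine Finset.sum_nbij' (fun j => p - j) (fun j => p - j) ?_ ?_ ?_ ?_ ?_
      · intro a ha; simp only [mem_Icc, mem_Ioc] at *; omega
      · intro a ha; simp only [mem_Icc, mem_Ioc] at *; omega
      · intro a ha; simp only [mem_Ioc] at ha; omega
      · intro a ha; simp only [mem_Icc] at ha; omega
      · intro a ha
        simp only [mem_Ioc] at ha
        have hqp : q ^ (p - a) = (q ^ a)⁻¹ := by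
          refine eq_inv_of_mul_eq_one_left ?_
          rw [← pow_add, Nat.sub_add_cancel (by omega), hq_prim.pow_eq_one]
        rw [hqp, hFinv]
    rw [hswap]; ring
  have hfinal : (algebraMap ℚ ℂ) (Algebra.trace ℚ K x) =
      2 * ∑ j ∈ Finset.Icc 1 m, F (q ^ j) := by
    rw [htr, hembed, h2, h3]
  rw [eq_ratCast] at hfinal
  push_cast
  rw [hfinal]
  rw [show ∀ c : ℂ, 2 * c / 2 = c from fun c => by ring]
  refine Finset.sum_congr rfl fun j hj => ?_
  rw [hF]
  simp only [inv_pow]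

theorem verlinde_number_galois_sum (p : ℕ) (hp : p.Prime) (hodd : Odd p)
    (q : ℂ) (hq : q = Complex.exp (2 * Real.pi * Complex.I / p))
    (g : ℕ) (hg : 1 ≤ g) (D : ℝ)
    (hD : D = ((p : ℝ) / 4) ^ (g - 1) *
      ∑ j ∈ Finset.Icc 1 ((p - 1) / 2), Real.sin (Real.pi * j / p) ^ ((2 : ℤ) - 2 * g)) :
    ((D : ℂ) = -(1 / (p : ℂ)) * ∑ j ∈ Finset.Icc 1 ((p - 1) / 2),
        (q ^ j - q⁻¹ ^ j) ^ 2 * (-(p : ℂ) / (q ^ j - q⁻¹ ^ j) ^ 2) ^ g) ∧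
    ∃ r : ℚ, D = (r : ℝ) := by
  have h1 := verlinde_aux1 p hp hodd q hq g hg D hD
  refine ⟨h1, ?_⟩
  obtain ⟨m, hpm⟩ := hodd
  have hp3 : 3 ≤ p := by rcases hp.two_le.lt_or_eq with h | h; omega; omega
  have hm2 : (p - 1) / 2 = m := by omega
  obtain ⟨r, hr⟩ := verlinde_aux2 p hp m hpm hp3 q hq g
  refine ⟨-r / p, ?_⟩
  apply Complex.ofReal_injective
  rw [h1, hm2, ← hr]
  push_cast
  ring
end

section
/- Let p be an odd prime, q = exp(2πi/p), and for integers n, m with 1 ≤ n,m ≤ p−1 consider T_{nm} = Σ_{j=1}^{p−1} (−1)^{(n+m)j}(q^{nj}−q^{−nj})(q^{mj}−q^{−mj}). Then T_{nm} = −2p if n = m and T_{nm} = 0 if n ≠ m. -/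
open Finset

lemma sum_Icc_pow (p : ℕ) (hp : 1 ≤ p) (z : ℂ) :
    ∑ j ∈ Icc 1 (p-1), z^j = (∑ j ∈ range p, z^j) - 1 := by
  have h : Icc 1 (p-1) = Ico 1 p := by
    rw [← Finset.Ico_add_one_right_eq_Icc]; congr 1; omega
  rw [h, Finset.sum_Ico_eq_sub _ hp]
  simp

lemma G_one (p : ℕ) (hp : 1 ≤ p) :
    ∑ j ∈ Icc 1 (p-1), (1:ℂ)^j = (p:ℂ) - 1 := by
  simp [sum_Icc_pow p hp, Nat.cast_sub hp]

lemma G_root (p : ℕ) (hp : 1 ≤ p) (z : ℂ) (hz : z ≠ 1) (hzp : z^p = 1) :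
    ∑ j ∈ Icc 1 (p-1), z^j = -1 := by
  rw [sum_Icc_pow p hp, geom_sum_eq hz, hzp]
  simp

lemma G_pair (p : ℕ) (hp : 1 ≤ p) (z : ℂ) (hz0 : z ≠ 0) (hzp : z^p = -1) :
    (∑ j ∈ Icc 1 (p-1), z^j) + ∑ j ∈ Icc 1 (p-1), (z⁻¹)^j = 0 := by
  have hz1 : z ≠ 1 := by rintro rfl; simp at hzp; norm_num at hzp
  have hzi1 : z⁻¹ ≠ 1 := by rw [Ne, inv_eq_one]; exact hz1
  have h1 : z - 1 ≠ 0 := sub_ne_zero.2 hz1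
  have h2 : z⁻¹ - 1 ≠ 0 := sub_ne_zero.2 hzi1
  have h3 : (1:ℂ) - z ≠ 0 := sub_ne_zero.2 (Ne.symm hz1)
  rw [sum_Icc_pow p hp, sum_Icc_pow p hp, geom_sum_eq hz1, geom_sum_eq hzi1,
    inv_pow, hzp]
  field_simp
  ring

theorem orthogonality_relation (p : ℕ) (hp : p.Prime) (hodd : Odd p)
    (q : ℂ) (hq : q = Complex.exp (2 * Real.pi * Complex.I / p))
    (n m : ℕ) (hn1 : 1 ≤ n) (hn2 : n ≤ p - 1) (hm1 : 1 ≤ m) (hm2 : m ≤ p - 1) :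
    ∑ j ∈ Finset.Icc 1 (p - 1),
      (-1 : ℂ) ^ ((n + m) * j) * (q ^ (n * j) - q⁻¹ ^ (n * j)) * (q ^ (m * j) - q⁻¹ ^ (m * j)) =
      if n = m then -(2 * (p : ℂ)) else 0 := by
  have hp1 : 1 < p := hp.one_lt
  have hp0 : p ≠ 0 := by omega
  have hprim : IsPrimitiveRoot q p := by
    rw [hq]; exact Complex.isPrimitiveRoot_exp p hp0
  have hq0 : q ≠ 0 := hprim.ne_zero hp0
  have hqp : q ^ p = 1 := hprim.pow_eq_one
  set a := q ^ n with ha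
  set b := q ^ m with hb
  have ha0 : a ≠ 0 := pow_ne_zero _ hq0
  have hb0 : b ≠ 0 := pow_ne_zero _ hq0
  set ε : ℂ := (-1) ^ (n + m) with hε
  have hε2 : ε * ε = 1 := by rw [hε, ← mul_pow]; norm_num
  have hεinv : ε⁻¹ = ε := inv_eq_of_mul_eq_one_right hε2
  set z₁ := ε * a * b with hz₁
  set z₂ := ε * a * b⁻¹ with hz₂
  have hz₁inv : z₁⁻¹ = ε * a⁻¹ * b⁻¹ := by
    rw [hz₁, mul_inv, mul_inv, hεinv]
  have hz₂inv : z₂⁻¹ = ε * a⁻¹ * b := by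
    rw [hz₂, mul_inv, mul_inv, hεinv, inv_inv]
  have hterm : ∀ j ∈ Icc 1 (p-1),
      (-1:ℂ)^((n+m)*j) * (q^(n*j) - q⁻¹^(n*j)) * (q^(m*j) - q⁻¹^(m*j))
      = z₁^j + (z₁⁻¹)^j - (z₂^j + (z₂⁻¹)^j) := by
    intro j _
    have e1 : (-1:ℂ)^((n+m)*j) = ε^j := pow_mul _ _ _
    have e2 : q^(n*j) = a^j := pow_mul q n j
    have e3 : q⁻¹^(n*j) = (a⁻¹)^j := by rw [pow_mul, inv_pow]
    have e4 : q^(m*j) = b^j := pow_mul q m j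
    have e5 : q⁻¹^(m*j) = (b⁻¹)^j := by rw [pow_mul, inv_pow]
    rw [e1, e2, e3, e4, e5, hz₁inv, hz₂inv, hz₁, hz₂]
    simp only [mul_pow]
    ring
  rw [Finset.sum_congr rfl hterm, Finset.sum_sub_distrib,
    Finset.sum_add_distrib, Finset.sum_add_distrib]
  have hple : 1 ≤ p := by omega
  have hpowp : ∀ k : ℕ, (q ^ k) ^ p = 1 := by
    intro k; rw [← pow_mul, mul_comm, pow_mul, hqp, one_pow]
  rcases Nat.even_or_odd (n + m) with hpar | hpar
  · -- even case
    have hεone : ε = 1 := hpar.neg_one_pow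
    have hz1eq : z₁ = q ^ (n + m) := by rw [hz₁, hεone, one_mul, ha, hb, ← pow_add]
    have hz1p : z₁ ^ p = 1 := by rw [hz1eq]; exact hpowp _
    have hndvd : ¬ p ∣ (n + m) := by
      rintro ⟨k, hk⟩
      have hk2 : k < 2 := by
        have h2 : p * k < p * 2 := by rw [← hk]; omega
        exact Nat.lt_of_mul_lt_mul_left h2
      have hk0 : k ≠ 0 := by rintro rfl; rw [mul_zero] at hk; omega
      have hk1 : k = 1 := by omega
      have hpeq : n + m = p := by rw [hk, hk1, mul_one]
      obtain ⟨t, ht⟩ := hodd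
      obtain ⟨s, hs⟩ := hpar
      omega
    have hz1ne : z₁ ≠ 1 := by
      rw [hz1eq]
      exact fun h => hndvd ((hprim.pow_eq_one_iff_dvd _).1 h)
    have hz1ine : z₁⁻¹ ≠ 1 := by rw [Ne, inv_eq_one]; exact hz1ne
    have hz1ip : (z₁⁻¹) ^ p = 1 := by rw [inv_pow, hz1p, inv_one]
    rw [G_root p hple z₁ hz1ne hz1p, G_root p hple z₁⁻¹ hz1ine hz1ip]
    have hz2p : z₂ ^ p = 1 := by
      rw [hz₂, hεone, one_mul, mul_pow, inv_pow, ha, hb, hpowp, hpowp, inv_one, mul_one]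
    by_cases hnm : n = m
    · subst hnm
      have hz2eq : z₂ = 1 := by
        rw [hz₂, hεone, one_mul, mul_inv_cancel₀ ha0]
      rw [if_pos rfl, hz2eq, inv_one, G_one p hple]
      ring
    · have hz2ne : z₂ ≠ 1 := by
        rw [hz₂, hεone, one_mul]
        intro h
        apply hnm
        have hab : a = b := by
          field_simp at h; exact h
        exact hprim.pow_inj (by omega) (by omega) hab
      have hz2ine : z₂⁻¹ ≠ 1 := by rw [Ne, inv_eq_one]; exact hz2ne
      have hz2ip : (z₂⁻¹) ^ p = 1 := by rw [inv_pow, hz2p, inv_one]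
      rw [if_neg hnm, G_root p hple z₂ hz2ne hz2p, G_root p hple z₂⁻¹ hz2ine hz2ip]
      ring
  · -- odd case
    have hεneg : ε = -1 := hpar.neg_one_pow
    have hnm : n ≠ m := by
      rintro rfl
      obtain ⟨t, ht⟩ := hpar
      omega
    have hz1p : z₁ ^ p = -1 := by
      rw [hz₁, hεneg, mul_pow, mul_pow, ha, hb, hpowp, hpowp, hodd.neg_one_pow,
        mul_one, mul_one]
    have hz2p : z₂ ^ p = -1 := by
      rw [hz₂, hεneg, mul_pow, mul_pow, inv_pow, ha, hb, hpowp, hpowp,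
        hodd.neg_one_pow, inv_one, mul_one, mul_one]
    have hz10 : z₁ ≠ 0 := by
      rw [hz₁, hεneg]; exact mul_ne_zero (mul_ne_zero (by norm_num) ha0) hb0
    have hz20 : z₂ ≠ 0 := by
      rw [hz₂, hεneg]
      exact mul_ne_zero (mul_ne_zero (by norm_num) ha0) (inv_ne_zero hb0)
    rw [if_neg hnm, G_pair p hple z₁ hz10 hz1p, G_pair p hple z₂ hz20 hz2p]
    norm_num
end

section
/- Let C be the 4×4 tridiagonal matrix with 2 on the diagonal and 1 on the sub/super-diagonal (the case p = 5). For every integer g ≥ 1 and 1 ≤ n ≤ 4, (C^g)_{n,1} = (2^{2g+1}/5) Σ_{j=1}^{2} sin(2πjn/5) sin(2πj/5) [cos(πj/5)^{2g} − (−1)^n sin(πj/5)^{2g}]. -/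
open Finset Matrix Real

noncomputable def Ffun (g n : ℕ) : ℝ :=
  (2 ^ (2 * g + 1) / 5) * ∑ j ∈ Finset.Icc (1 : ℕ) 2,
    Real.sin (2 * Real.pi * j * n / 5) * Real.sin (2 * Real.pi * j / 5) *
      ((Real.cos (Real.pi * j / 5)) ^ (2 * g) -
        (-1 : ℝ) ^ n * (Real.sin (Real.pi * j / 5)) ^ (2 * g))

lemma icc12 : Finset.Icc (1 : ℕ) 2 = {1, 2} := rfl

lemma hq' : 4 * Real.cos (Real.pi/5) ^ 2 - 2 * Real.cos (Real.pi/5) - 1 = 0 :=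
  Real.quadratic_root_cos_pi_div_five

lemma hs' : Real.sin (Real.pi/5) ^ 2 + Real.cos (Real.pi/5) ^ 2 - 1 = 0 := by
  rw [Real.sin_sq_add_cos_sq]; ring

-- abbreviations
local notation "s" => Real.sin (Real.pi/5)
local notation "c" => Real.cos (Real.pi/5)

lemma v_sin2 : Real.sin (2 * (Real.pi/5)) = 2 * s * c := Real.sin_two_mul _
lemma v_cos2 : Real.cos (2 * (Real.pi/5)) = 2 * c ^ 2 - 1 := Real.cos_two_mul _

lemma Fval1 (g : ℕ) : Ffun g 1 =
    (2 ^ (2*g+1) / 5) * ((2*s*c) * (2*s*c) * (c^(2*g) + s^(2*g)) +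
      s * s * ((2*c^2-1)^(2*g) + (2*s*c)^(2*g))) := by
  rw [Ffun, icc12, Finset.sum_insert (by decide), Finset.sum_singleton]
  push_cast
  rw [show (2 * Real.pi * 1 * 1 / 5 : ℝ) = 2 * (Real.pi/5) by ring,
      show (2 * Real.pi * 1 / 5 : ℝ) = 2 * (Real.pi/5) by ring,
      show (Real.pi * 1 / 5 : ℝ) = Real.pi/5 by ring,
      show (2 * Real.pi * 2 * 1 / 5 : ℝ) = Real.pi - Real.pi/5 by ring,
      show (2 * Real.pi * 2 / 5 : ℝ) = Real.pi - Real.pi/5 by ring,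
      show (Real.pi * 2 / 5 : ℝ) = 2 * (Real.pi/5) by ring,
      Real.sin_pi_sub, v_sin2, v_cos2]
  ring

lemma Fval2 (g : ℕ) : Ffun g 2 =
    (2 ^ (2*g+1) / 5) * (s * (2*s*c) * (c^(2*g) - s^(2*g)) -
      (2*s*c) * s * ((2*c^2-1)^(2*g) - (2*s*c)^(2*g))) := by
  rw [Ffun, icc12, Finset.sum_insert (by decide), Finset.sum_singleton]
  push_cast
  rw [show (2 * Real.pi * 1 * 2 / 5 : ℝ) = Real.pi - Real.pi/5 by ring,
      show (2 * Real.pi * 1 / 5 : ℝ) = 2 * (Real.pi/5) by ring,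
      show (Real.pi * 1 / 5 : ℝ) = Real.pi/5 by ring,
      show (2 * Real.pi * 2 * 2 / 5 : ℝ) = -(2 * (Real.pi/5)) + 2 * Real.pi by ring,
      show (2 * Real.pi * 2 / 5 : ℝ) = Real.pi - Real.pi/5 by ring,
      show (Real.pi * 2 / 5 : ℝ) = 2 * (Real.pi/5) by ring,
      Real.sin_add_two_pi, Real.sin_neg, Real.sin_pi_sub, v_sin2, v_cos2]
  ring

lemma Fval3 (g : ℕ) : Ffun g 3 =
    (2 ^ (2*g+1) / 5) * (-(s * (2*s*c)) * (c^(2*g) + s^(2*g)) +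
      (2*s*c) * s * ((2*c^2-1)^(2*g) + (2*s*c)^(2*g))) := by
  rw [Ffun, icc12, Finset.sum_insert (by decide), Finset.sum_singleton]
  push_cast
  rw [show (2 * Real.pi * 1 * 3 / 5 : ℝ) = Real.pi/5 + Real.pi by ring,
      show (2 * Real.pi * 1 / 5 : ℝ) = 2 * (Real.pi/5) by ring,
      show (Real.pi * 1 / 5 : ℝ) = Real.pi/5 by ring,
      show (2 * Real.pi * 2 * 3 / 5 : ℝ) = 2 * (Real.pi/5) + 2 * Real.pi by ring,
      show (2 * Real.pi * 2 / 5 : ℝ) = Real.pi - Real.pi/5 by ring,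
      show (Real.pi * 2 / 5 : ℝ) = 2 * (Real.pi/5) by ring,
      Real.sin_add_two_pi, Real.sin_add_pi, Real.sin_pi_sub, v_sin2, v_cos2]
  ring

lemma Fval4 (g : ℕ) : Ffun g 4 =
    (2 ^ (2*g+1) / 5) * (-((2*s*c) * (2*s*c)) * (c^(2*g) - s^(2*g)) -
      s * s * ((2*c^2-1)^(2*g) - (2*s*c)^(2*g))) := by
  rw [Ffun, icc12, Finset.sum_insert (by decide), Finset.sum_singleton]
  push_cast
  rw [show (2 * Real.pi * 1 * 4 / 5 : ℝ) = -(2 * (Real.pi/5)) + 2 * Real.pi by ring,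
      show (2 * Real.pi * 1 / 5 : ℝ) = 2 * (Real.pi/5) by ring,
      show (Real.pi * 1 / 5 : ℝ) = Real.pi/5 by ring,
      show (2 * Real.pi * 2 * 4 / 5 : ℝ) = (Real.pi/5 + Real.pi) + 2 * Real.pi by ring,
      show (2 * Real.pi * 2 / 5 : ℝ) = Real.pi - Real.pi/5 by ring,
      show (Real.pi * 2 / 5 : ℝ) = 2 * (Real.pi/5) by ring,
      Real.sin_add_two_pi, Real.sin_add_two_pi, Real.sin_add_pi, Real.sin_neg,
      Real.sin_pi_sub, v_sin2, v_cos2]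
  ring

lemma Fbase1 : Ffun 1 1 = 2 := by
  have hq := hq'; have hs := hs'
  rw [Fval1]
  linear_combination (8/5 : ℝ) * (((1/4:ℝ) + (-1/2:ℝ)*c + -1*c^2) * hq + (1 + 4*c^2 + 8*s^2*c^2) * hs)

lemma Fbase2 : Ffun 1 2 = 1 := by
  have hq := hq'; have hs := hs'
  rw [Fval2]
  linear_combination (8/5 : ℝ) * (((5/8:ℝ) + (11/4:ℝ)*c + -3*c^2 + -7*c^3 + 2*c^4 + 4*c^5) * hq + (-4*c + 20*c^3 + -16*c^5 + -2*s^2*c + 8*s^2*c^3) * hs)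

lemma Fbase3 : Ffun 1 3 = 0 := by
  have hq := hq'; have hs := hs'
  rw [Fval3]
  linear_combination (8/5 : ℝ) * ((0:ℝ) * hq + (-2*s^2*c + 8*s^2*c^3) * hs)

lemma Fbase4 : Ffun 1 4 = 0 := by
  have hq := hq'; have hs := hs'
  rw [Fval4]
  linear_combination (8/5 : ℝ) * ((1 + -2*c + -5*c^2 + 2*c^3 + 4*c^4) * hq + (-1 + 12*c^2 + -16*c^4 + 8*s^2*c^2) * hs)

lemma Fstep1 (g : ℕ) : Ffun (g+1) 1 = 2 * Ffun g 1 + Ffun g 2 := by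
  have hq := hq'; have hs := hs'
  rw [Fval1, Fval1, Fval2]
  linear_combination (2^(2*g+1)/5 : ℝ) * ((c^(2*g) * (2*c + 4*c^2 + -2*c^3 + -4*c^4) + s^(2*g) * (-2*c + -4*c^2 + 2*c^3 + 4*c^4) + (2*c^2-1)^(2*g) * (-2 + 2*c + 6*c^2 + -2*c^3 + -4*c^4) + (2*s*c)^(2*g) * (2 + -2*c + -6*c^2 + 2*c^3 + 4*c^4)) * hq + (c^(2*g) * (-2*c + -8*c^2 + 16*c^4) + s^(2*g) * (2*c + 8*c^2 + -16*c^4 + 16*s^2*c^2) + (2*c^2-1)^(2*g) * (2 + 2*c + -16*c^2 + 16*c^4) + (2*s*c)^(2*g) * (-2 + -2*c + 16*c^2 + -16*c^4 + 16*s^2*c^2)) * hs)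

lemma Fstep2 (g : ℕ) : Ffun (g+1) 2 = Ffun g 1 + 2 * Ffun g 2 + Ffun g 3 := by
  have hq := hq'; have hs := hs'
  rw [Fval2, Fval1, Fval2, Fval3]
  linear_combination (2^(2*g+1)/5 : ℝ) * ((c^(2*g) * (2*c + -2*c^3) + s^(2*g) * (2*c + -2*c^3) + (2*c^2-1)^(2*g) * (1 + 4*c + -5*c^2 + -12*c^3 + 4*c^4 + 8*c^5) + (2*s*c)^(2*g) * (1 + 4*c + -5*c^2 + -12*c^3 + 4*c^4 + 8*c^5)) * hq + (c^(2*g) * (-2*c + -4*c^2 + 8*c^3) + s^(2*g) * (-2*c + -4*c^2 + 8*c^3 + -8*s^2*c) + (2*c^2-1)^(2*g) * (-1 + -6*c + 32*c^3 + -32*c^5) + (2*s*c)^(2*g) * (-1 + -6*c + 32*c^3 + -32*c^5 + 32*s^2*c^3)) * hs)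

lemma Fstep3 (g : ℕ) : Ffun (g+1) 3 = Ffun g 2 + 2 * Ffun g 3 + Ffun g 4 := by
  have hq := hq'; have hs := hs'
  rw [Fval3, Fval2, Fval3, Fval4]
  linear_combination (2^(2*g+1)/5 : ℝ) * ((c^(2*g) * (-2*c + 2*c^3) + s^(2*g) * (2*c + -2*c^3) + (2*c^2-1)^(2*g) * (-1 + -4*c + 5*c^2 + 12*c^3 + -4*c^4 + -8*c^5) + (2*s*c)^(2*g) * (1 + 4*c + -5*c^2 + -12*c^3 + 4*c^4 + 8*c^5)) * hq + (c^(2*g) * (2*c + 4*c^2 + -8*c^3) + s^(2*g) * (-2*c + -4*c^2 + 8*c^3 + -8*s^2*c) + (2*c^2-1)^(2*g) * (1 + 6*c + -32*c^3 + 32*c^5) + (2*s*c)^(2*g) * (-1 + -6*c + 32*c^3 + -32*c^5 + 32*s^2*c^3)) * hs)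

lemma Fstep4 (g : ℕ) : Ffun (g+1) 4 = Ffun g 3 + 2 * Ffun g 4 := by
  have hq := hq'; have hs := hs'
  rw [Fval4, Fval3, Fval4]
  linear_combination (2^(2*g+1)/5 : ℝ) * ((c^(2*g) * (-2*c + -4*c^2 + 2*c^3 + 4*c^4) + s^(2*g) * (-2*c + -4*c^2 + 2*c^3 + 4*c^4) + (2*c^2-1)^(2*g) * (2 + -2*c + -6*c^2 + 2*c^3 + 4*c^4) + (2*s*c)^(2*g) * (2 + -2*c + -6*c^2 + 2*c^3 + 4*c^4)) * hq + (c^(2*g) * (2*c + 8*c^2 + -16*c^4) + s^(2*g) * (2*c + 8*c^2 + -16*c^4 + 16*s^2*c^2) + (2*c^2-1)^(2*g) * (-2 + -2*c + 16*c^2 + -16*c^4) + (2*s*c)^(2*g) * (-2 + -2*c + 16*c^2 + -16*c^4 + 16*s^2*c^2)) * hs)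

lemma main_lemma (C : Matrix (Fin 4) (Fin 4) ℝ)
    (hC : ∀ i j : Fin 4, C i j =
      if (i : ℕ) = (j : ℕ) then 2
      else if (i : ℕ) + 1 = (j : ℕ) ∨ (j : ℕ) + 1 = (i : ℕ) then 1 else 0) :
    ∀ g : ℕ, 1 ≤ g →
      (C ^ g) 0 0 = Ffun g 1 ∧ (C ^ g) 1 0 = Ffun g 2 ∧
      (C ^ g) 2 0 = Ffun g 3 ∧ (C ^ g) 3 0 = Ffun g 4 := by
  have e0 : ((0 : Fin 4) : ℕ) = 0 := rfl
  have e1 : ((1 : Fin 4) : ℕ) = 1 := rfl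
  have e2 : ((2 : Fin 4) : ℕ) = 2 := rfl
  have e3 : ((3 : Fin 4) : ℕ) = 3 := rfl
  intro g hg
  induction g, hg using Nat.le_induction with
  | base =>
    rw [pow_one, Fbase1, Fbase2, Fbase3, Fbase4]
    refine ⟨?_, ?_, ?_, ?_⟩ <;> rw [hC] <;> simp only [e0, e1, e2, e3] <;> norm_num
  | succ g hg ih =>
    obtain ⟨h1, h2, h3, h4⟩ := ih
    rw [pow_succ']
    refine ⟨?_, ?_, ?_, ?_⟩ <;>
      rw [Matrix.mul_apply, Fin.sum_univ_four] <;>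
      simp only [hC, e0, e1, e2, e3, h1, h2, h3, h4] <;> norm_num
    · rw [Fstep1]
    · rw [Fstep2]
    · rw [Fstep3]
    · rw [Fstep4]

theorem Cpow_entry_trig_formula_p_five
    (C : Matrix (Fin 4) (Fin 4) ℝ)
    (hC : ∀ i j : Fin 4, C i j =
      if (i : ℕ) = (j : ℕ) then 2
      else if (i : ℕ) + 1 = (j : ℕ) ∨ (j : ℕ) + 1 = (i : ℕ) then 1 else 0)
    (g n : ℕ) (hg : 1 ≤ g) (hn1 : 1 ≤ n) (hn2 : n ≤ 4) :
    (C ^ g) ⟨n - 1, by omega⟩ ⟨0, by omega⟩ =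
      (2 ^ (2 * g + 1) / 5) * ∑ j ∈ Finset.Icc (1 : ℕ) 2,
        Real.sin (2 * Real.pi * j * n / 5) * Real.sin (2 * Real.pi * j / 5) *
          ((Real.cos (Real.pi * j / 5)) ^ (2 * g) -
            (-1 : ℝ) ^ n * (Real.sin (Real.pi * j / 5)) ^ (2 * g)) := by
  obtain ⟨h1, h2, h3, h4⟩ := main_lemma C hC g hg
  interval_cases n
  · exact h1
  · exact h2
  · exact h3
  · exact h4
end
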